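/- arXiv:2407.17837 — 4 statements merged into one kernel-verified Lean document; each statement's English description precedes it below -/
import Mathlib

section
/- Let p > 1, λ ≥ 0, and define V_λ(B) = (λ² + |B|²)^((p-2)/4) B for B ∈ ℝ^k (with V_λ(0) = 0 when λ = 0 and p < 2). Then for any A, B ∈ ℝ^k there holds (λ² + |A|²)^((p-2)/2) |A| |B| ≤ C(p) (|V_λ(A)|² + |V_λ(B)|²). -/
open MeasureTheory

/-- The V-function `V_λ(B) = (λ² + |B|²)^((p-2)/4) B`. -/
noncomputable def Vfun (p lam : ℝ) {k : ℕ} (B : EuclideanSpace ℝ (Fin k)) :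
    EuclideanSpace ℝ (Fin k) :=
  ((lam ^ 2 + ‖B‖ ^ 2) ^ ((p - 2) / 4)) • B

lemma Vfun_norm_sq (p lam : ℝ) {k : ℕ} (B : EuclideanSpace ℝ (Fin k)) :
    ‖Vfun p lam B‖ ^ 2 = (lam ^ 2 + ‖B‖ ^ 2) ^ ((p - 2) / 2) * ‖B‖ ^ 2 := by
  have h0 : (0:ℝ) ≤ lam ^ 2 + ‖B‖ ^ 2 := by positivity
  rw [Vfun, norm_smul, Real.norm_eq_abs, abs_of_nonneg (Real.rpow_nonneg h0 _),
    mul_pow, ← Real.rpow_natCast ((lam ^ 2 + ‖B‖ ^ 2) ^ ((p - 2) / 4)) 2,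
    ← Real.rpow_mul h0]
  congr 1
  ring_nf

lemma mono_aux (p lam : ℝ) (hp : 1 < p) {a b : ℝ} (ha : 0 ≤ a) (hab : a ≤ b) :
    (lam ^ 2 + a ^ 2) ^ ((p - 2) / 2) * a ≤ (lam ^ 2 + b ^ 2) ^ ((p - 2) / 2) * b := by
  by_cases hp2 : 2 ≤ p
  · exact mul_le_mul (Real.rpow_le_rpow (by positivity) (by nlinarith) (by linarith))
      hab ha (Real.rpow_nonneg (by positivity) _)
  push_neg at hp2
  by_cases ha0 : a = 0
  · subst ha0
    simp only [mul_zero]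
    exact mul_nonneg (Real.rpow_nonneg (by positivity) _) (by linarith)
  have ha' : 0 < a := lt_of_le_of_ne ha (Ne.symm ha0)
  have hb' : 0 < b := lt_of_lt_of_le ha' hab
  set s : ℝ := lam ^ 2 + a ^ 2 with hs_def
  set t : ℝ := lam ^ 2 + b ^ 2 with ht_def
  have hs : 0 < s := by positivity
  have ht : 0 < t := by positivity
  have hst : s ≤ t := by nlinarith
  -- key squared inequality
  have h1 : a ^ 2 ≤ b ^ 2 * s / t := by
    rw [le_div_iff₀ ht]
    nlinarith
  have e1 : s ^ (p - 2) * s = s ^ (p - 1) := by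
    rw [← Real.rpow_add_one hs.ne' (p - 2)]
    congr 1
    ring_nf
  have e2 : t ^ (p - 1) = t ^ (p - 2) * t := by
    rw [← Real.rpow_add_one ht.ne' (p - 2)]
    congr 1
    ring_nf
  have h2 : s ^ (p - 1) ≤ t ^ (p - 1) := Real.rpow_le_rpow hs.le hst (by linarith)
  have hsq : s ^ (p - 2) * a ^ 2 ≤ t ^ (p - 2) * b ^ 2 := by
    have hsp : (0:ℝ) ≤ s ^ (p - 2) := Real.rpow_nonneg hs.le _
    calc s ^ (p - 2) * a ^ 2 ≤ s ^ (p - 2) * (b ^ 2 * s / t) :=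
          mul_le_mul_of_nonneg_left h1 hsp
      _ = (s ^ (p - 2) * s) * b ^ 2 / t := by ring
      _ = s ^ (p - 1) * b ^ 2 / t := by rw [e1]
      _ ≤ t ^ (p - 1) * b ^ 2 / t := by gcongr
      _ = (t ^ (p - 2) * t) * b ^ 2 / t := by rw [e2]
      _ = t ^ (p - 2) * b ^ 2 := by field_simp
  -- relate squares back
  have eL : (s ^ ((p - 2) / 2) * a) ^ 2 = s ^ (p - 2) * a ^ 2 := by
    rw [mul_pow, ← Real.rpow_natCast (s ^ ((p - 2) / 2)) 2, ← Real.rpow_mul hs.le]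
    congr 1
    ring_nf
  have eR : (t ^ ((p - 2) / 2) * b) ^ 2 = t ^ (p - 2) * b ^ 2 := by
    rw [mul_pow, ← Real.rpow_natCast (t ^ ((p - 2) / 2)) 2, ← Real.rpow_mul ht.le]
    congr 1
    ring_nf
  have hL : 0 ≤ s ^ ((p - 2) / 2) * a := mul_nonneg (Real.rpow_nonneg hs.le _) ha
  have hR : 0 ≤ t ^ ((p - 2) / 2) * b := mul_nonneg (Real.rpow_nonneg ht.le _) hb'.le
  nlinarith [eL ▸ eR ▸ hsq]

lemma key_ineq (p : ℝ) (hp : 1 < p) (lam : ℝ) {a b : ℝ} (ha : 0 ≤ a) (hb : 0 ≤ b) :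
    (lam ^ 2 + a ^ 2) ^ ((p - 2) / 2) * a * b ≤
      (lam ^ 2 + a ^ 2) ^ ((p - 2) / 2) * a ^ 2 +
        (lam ^ 2 + b ^ 2) ^ ((p - 2) / 2) * b ^ 2 := by
  rcases le_total b a with h | h
  · have hnn : (0:ℝ) ≤ (lam ^ 2 + a ^ 2) ^ ((p - 2) / 2) * a :=
      mul_nonneg (Real.rpow_nonneg (by positivity) _) ha
    have h2 : (0:ℝ) ≤ (lam ^ 2 + b ^ 2) ^ ((p - 2) / 2) * b ^ 2 := by positivity
    nlinarith
  · have h1 := mono_aux p lam hp ha h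
    have h3 : (lam ^ 2 + a ^ 2) ^ ((p - 2) / 2) * a * b ≤
        (lam ^ 2 + b ^ 2) ^ ((p - 2) / 2) * b * b :=
      mul_le_mul_of_nonneg_right h1 hb
    have h2 : (0:ℝ) ≤ (lam ^ 2 + a ^ 2) ^ ((p - 2) / 2) * a ^ 2 := by positivity
    nlinarith

/-- Lemma 2.1, inequality (2.11):
`(λ² + |A|²)^((p-2)/2) |A| |B| ≤ C(p) (|V_λ(A)|² + |V_λ(B)|²)`. -/
theorem V_product_bound (p : ℝ) (hp : 1 < p) :
    ∃ C : ℝ, 0 < C ∧ ∀ (lam : ℝ), 0 ≤ lam → ∀ (k : ℕ)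
      (A B : EuclideanSpace ℝ (Fin k)),
      (lam ^ 2 + ‖A‖ ^ 2) ^ ((p - 2) / 2) * ‖A‖ * ‖B‖ ≤
        C * (‖Vfun p lam A‖ ^ 2 + ‖Vfun p lam B‖ ^ 2) := by
  refine ⟨1, one_pos, fun lam hlam k A B => ?_⟩
  rw [Vfun_norm_sq, Vfun_norm_sq, one_mul]
  exact key_ineq p hp lam (norm_nonneg A) (norm_nonneg B)
end

section
/- For every σ ∈ (-1/2, 0) and μ ≥ 0, and for any A, Ã ∈ ℝ^(Nn) not both zero if μ = 0, the quantity ∫₀¹ (μ² + |A + s(Ã - A)|²)^σ ds divided by (μ² + |A|² + |Ã|²)^σ lies in the interval [1, 8/(2σ+1)]. -/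
open MeasureTheory

/- auxiliary: a.e. avoidance of a point -/
lemma seg_ae_ne (x : ℝ) : ∀ᵐ s : ℝ ∂volume, s ≠ x := by
  refine ae_iff.mpr ?_
  simp only [ne_eq, not_not, Set.setOf_eq_eq_singleton]
  exact Real.volume_singleton

lemma seg_sq_rpow (x : ℝ) (hx : 0 ≤ x) (σ : ℝ) : (x ^ 2) ^ σ = x ^ (2 * σ) := by
  rw [← Real.rpow_natCast x 2, ← Real.rpow_mul hx]
  norm_num

/- |x|^r is interval integrable for r > -1 -/
lemma seg_intervalIntegrable_abs_rpow {r : ℝ} (hr : -1 < r) (a b : ℝ) :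
    IntervalIntegrable (fun x : ℝ => |x| ^ r) volume a b := by
  have h : ∀ c : ℝ, 0 ≤ c → IntervalIntegrable (fun x : ℝ => |x| ^ r) volume 0 c := by
    intro c hc
    have h1 : IntervalIntegrable (fun x : ℝ => x ^ r) volume 0 c :=
      intervalIntegral.intervalIntegrable_rpow' hr
    rw [intervalIntegrable_iff, Set.uIoc_of_le hc] at h1 ⊢
    exact h1.congr_fun (fun x hx => by rw [abs_of_pos hx.1]) measurableSet_Ioc
  have key : ∀ c : ℝ, IntervalIntegrable (fun x : ℝ => |x| ^ r) volume 0 c := by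
    intro c
    rcases le_total 0 c with hc | hc
    · exact h c hc
    · have h2 := h (-c) (by linarith)
      rw [IntervalIntegrable.iff_comp_neg] at h2
      simpa [abs_neg] using h2
  exact (key a).symm.trans (key b)

/- integrability of the quadratic to a negative power -/
lemma seg_integrable_quad_rpow (σ c s₀ K : ℝ) (hσ1 : -(1/2 : ℝ) < σ) (hσ0 : σ < 0)
    (hc : 0 < c) (hK : 0 ≤ K) (u v : ℝ) :
    IntervalIntegrable (fun s : ℝ => (c * (s - s₀) ^ 2 + K) ^ σ) volume u v := by
  have h2σ : (-1 : ℝ) < 2 * σ := by linarith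
  have hg : IntervalIntegrable (fun s : ℝ => c ^ σ * |s - s₀| ^ (2 * σ)) volume u v := by
    have := (seg_intervalIntegrable_abs_rpow h2σ (u - s₀) (v - s₀)).comp_sub_right s₀
    simpa using this.const_mul (c ^ σ)
  refine hg.mono_fun' ?_ ?_
  · apply Measurable.aestronglyMeasurable
    exact (((measurable_id.sub measurable_const).pow measurable_const).const_mul c
      |>.add measurable_const).pow measurable_const
  · filter_upwards [ae_restrict_of_ae (seg_ae_ne s₀)] with s hs
    have hssq : 0 < (s - s₀) ^ 2 :=
      lt_of_le_of_ne (sq_nonneg _) (Ne.symm (pow_ne_zero 2 (sub_ne_zero.mpr hs)))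
    have hpos : 0 < c * (s - s₀) ^ 2 := mul_pos hc hssq
    have h1 : (c * (s - s₀) ^ 2 + K) ^ σ ≤ (c * (s - s₀) ^ 2) ^ σ :=
      Real.rpow_le_rpow_of_nonpos hpos (le_add_of_nonneg_right hK) hσ0.le
    have h2 : (c * (s - s₀) ^ 2) ^ σ = c ^ σ * |s - s₀| ^ (2 * σ) := by
      rw [Real.mul_rpow hc.le (sq_nonneg _), ← sq_abs, seg_sq_rpow _ (abs_nonneg _)]
    rw [Real.norm_eq_abs, abs_of_nonneg (Real.rpow_nonneg (by positivity) σ)]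
    calc (c * (s - s₀) ^ 2 + K) ^ σ ≤ (c * (s - s₀) ^ 2) ^ σ := h1
      _ = c ^ σ * |s - s₀| ^ (2 * σ) := h2

/- x^(-σ) ≤ y when x ≤ y² -/
lemma seg_rpow_neg_le (σ x y : ℝ) (hσ1 : -(1/2 : ℝ) < σ) (hx : 1 ≤ x) (hy : 0 ≤ y)
    (hxy : x ≤ y ^ 2) : x ^ (-σ) ≤ y := by
  calc x ^ (-σ) ≤ x ^ ((1 : ℝ)/2) := Real.rpow_le_rpow_of_exponent_le hx (by linarith)
    _ = Real.sqrt x := (Real.sqrt_eq_rpow x).symm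
    _ ≤ Real.sqrt (y ^ 2) := Real.sqrt_le_sqrt hxy
    _ = y := Real.sqrt_sq hy

/- (X/d)^σ ≤ C * X^σ -/
lemma seg_div_rpow_le (σ X d C : ℝ) (hX : 0 < X) (hd : 0 < d) (hC : d ^ (-σ) ≤ C) :
    (X / d) ^ σ ≤ C * X ^ σ := by
  rw [Real.div_rpow hX.le hd.le, div_eq_mul_inv, ← Real.rpow_neg hd.le]
  calc X ^ σ * d ^ (-σ) ≤ X ^ σ * C :=
        mul_le_mul_of_nonneg_left hC (Real.rpow_nonneg hX.le σ)
    _ = C * X ^ σ := mul_comm _ _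

lemma seg_last_step (r X Y : ℝ) (hr : 0 < r) (h : X ≤ 8 * Y) :
    X * (1 / r) ≤ 8 / r * Y := by
  rw [mul_one_div, div_mul_eq_mul_div]
  gcongr

set_option maxHeartbeats 1000000 in
lemma seg_quad_bounds (σ t a b c : ℝ) (hσ1 : -(1/2 : ℝ) < σ) (hσ0 : σ < 0)
    (ht : 0 ≤ t) (ha : 0 ≤ a) (hc : 0 ≤ c) (hcs : b ^ 2 ≤ a * c)
    (habc : 0 ≤ a + 2 * b + c) (hM : 0 < t + a + (a + 2 * b + c)) :
    (t + a + (a + 2 * b + c)) ^ σ ≤ (∫ s in (0:ℝ)..1, (t + (a + 2 * b * s + c * s ^ 2)) ^ σ) ∧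
      (∫ s in (0:ℝ)..1, (t + (a + 2 * b * s + c * s ^ 2)) ^ σ)
        ≤ 8 / (2 * σ + 1) * (t + a + (a + 2 * b + c)) ^ σ := by
  have hr0 : 0 < 2 * σ + 1 := by linarith
  have h2σ : (-1 : ℝ) < 2 * σ := by linarith
  have h8r : (8 : ℝ) ≤ 8 / (2 * σ + 1) := by
    rw [le_div_iff₀ hr0]; nlinarith
  rcases eq_or_lt_of_le hc with hc0 | hc0
  · -- c = 0
    have hceq : c = 0 := hc0.symm
    have hb0 : b = 0 := by nlinarith [sq_nonneg b]
    subst hceq hb0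
    have hta : 0 < t + a := by nlinarith
    have h2ta : 0 < t + a + (a + 2 * 0 + 0) := hM
    have hconst : (∫ s in (0:ℝ)..1, (t + (a + 2 * 0 * s + 0 * s ^ 2)) ^ σ) = (t + a) ^ σ := by
      norm_num
    rw [hconst]
    norm_num at h2ta ⊢
    constructor
    · exact Real.rpow_le_rpow_of_nonpos hta (by linarith) hσ0.le
    · calc (t + a) ^ σ ≤ ((t + a + a) / 2) ^ σ :=
            Real.rpow_le_rpow_of_nonpos (by linarith) (by linarith) hσ0.le
        _ ≤ 2 * (t + a + a) ^ σ :=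
            seg_div_rpow_le σ _ 2 2 (by linarith) (by norm_num)
              (seg_rpow_neg_le σ 2 2 hσ1 (by norm_num) (by norm_num) (by norm_num))
        _ ≤ 8 / (2 * σ + 1) * (t + a + a) ^ σ := by
            have : 0 ≤ (t + a + a) ^ σ := Real.rpow_nonneg (by linarith) σ
            nlinarith
  · -- 0 < c
    have hqid : ∀ s : ℝ, t + (a + 2 * b * s + c * s ^ 2)
        = c * (s - (-b / c)) ^ 2 + (t + a - b ^ 2 / c) := by
      intro s; field_simp; ring
    set s₀ : ℝ := -b / c with hs₀def
    set K : ℝ := t + a - b ^ 2 / c with hKdef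
    set M : ℝ := t + a + (a + 2 * b + c) with hMdef
    simp only [hqid]
    have hK0 : 0 ≤ K := by
      rw [hKdef]
      have hbc : b ^ 2 / c ≤ a := by rw [div_le_iff₀ hc0]; linarith
      linarith
    have hq0 : t + a = c * s₀ ^ 2 + K := by simpa using hqid 0
    have hq1 : t + (a + 2 * b + c) = c * (1 - s₀) ^ 2 + K := by simpa using hqid 1
    set m : ℝ := max |s₀| |1 - s₀| with hmdef
    have hm0 : |s₀| ≤ m := le_max_left _ _
    have hm1 : |1 - s₀| ≤ m := le_max_right _ _
    have hmhalf : 1/2 ≤ m := by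
      have h1 : (1:ℝ) = |s₀ + (1 - s₀)| := by norm_num
      have h2 : |s₀ + (1 - s₀)| ≤ |s₀| + |1 - s₀| := abs_add_le _ _
      linarith
    have hmpos : 0 < m := by linarith
    have hs0m : s₀ ^ 2 ≤ m ^ 2 := by
      have h := pow_le_pow_left₀ (abs_nonneg s₀) hm0 2
      rwa [sq_abs] at h
    have hs1m : (1 - s₀) ^ 2 ≤ m ^ 2 := by
      have h := pow_le_pow_left₀ (abs_nonneg (1 - s₀)) hm1 2
      rwa [sq_abs] at h
    have hMle : M ≤ 2 * K + 2 * (c * m ^ 2) := by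
      have e0 : c * s₀ ^ 2 ≤ c * m ^ 2 := mul_le_mul_of_nonneg_left hs0m hc0.le
      have e1 : c * (1 - s₀) ^ 2 ≤ c * m ^ 2 := mul_le_mul_of_nonneg_left hs1m hc0.le
      rw [hMdef]; linarith
    have hqleM : ∀ s ∈ Set.Icc (0:ℝ) 1, c * (s - s₀) ^ 2 + K ≤ M := by
      intro s hs
      rw [← hqid s, hMdef]
      obtain ⟨hs0, hs1⟩ := hs
      nlinarith [mul_nonneg (sub_nonneg.mpr hs1) habc,
        mul_nonneg (mul_nonneg hc0.le hs0) (sub_nonneg.mpr hs1), mul_nonneg hs0 ha]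
    have hqpos : ∀ s : ℝ, s ≠ s₀ → 0 < c * (s - s₀) ^ 2 + K := by
      intro s hs
      have hssq : 0 < (s - s₀) ^ 2 :=
        lt_of_le_of_ne (sq_nonneg _) (Ne.symm (pow_ne_zero 2 (sub_ne_zero.mpr hs)))
      nlinarith
    have hint : ∀ u v : ℝ, IntervalIntegrable (fun s => (c * (s - s₀) ^ 2 + K) ^ σ) volume u v :=
      fun u v => seg_integrable_quad_rpow σ c s₀ K hσ1 hσ0 hc0 hK0 u v
    clear_value s₀ K M m
    have hMσpos : 0 < M ^ σ := Real.rpow_pos_of_pos hM σ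
    constructor
    · -- lower bound
      have hconst : (∫ _s in (0:ℝ)..1, M ^ σ) = M ^ σ := by simp
      rw [← hconst]
      apply intervalIntegral.integral_mono_ae_restrict zero_le_one
        intervalIntegrable_const (hint 0 1)
      filter_upwards [ae_restrict_of_ae (seg_ae_ne s₀), ae_restrict_mem measurableSet_Icc]
        with s hs hmem
      exact Real.rpow_le_rpow_of_nonpos (hqpos s hs) (hqleM s hmem) hσ0.le
    · -- upper bound
      by_cases hA : c * m ^ 2 ≤ K
      · have hKpos : 0 < K := by linarith
        have hup1 : (∫ s in (0:ℝ)..1, (c * (s - s₀) ^ 2 + K) ^ σ) ≤ K ^ σ := by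
          have hconst : (∫ _s in (0:ℝ)..1, (K:ℝ) ^ σ) = K ^ σ := by simp
          rw [← hconst]
          apply intervalIntegral.integral_mono_on zero_le_one (hint 0 1) intervalIntegrable_const
          intro s _hs
          exact Real.rpow_le_rpow_of_nonpos hKpos (le_add_of_nonneg_left (by positivity)) hσ0.le
        have hup2 : K ^ σ ≤ (M / 4) ^ σ :=
          Real.rpow_le_rpow_of_nonpos (by linarith) (by linarith) hσ0.le
        have hup3 : (M / 4) ^ σ ≤ 2 * M ^ σ :=
          seg_div_rpow_le σ M 4 2 hM (by norm_num)
            (seg_rpow_neg_le σ 4 2 hσ1 (by norm_num) (by norm_num) (by norm_num))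
        have hup4 : 2 * M ^ σ ≤ 8 / (2 * σ + 1) * M ^ σ := by
          have h := mul_le_mul_of_nonneg_right h8r hMσpos.le
          linarith
        linarith
      · push_neg at hA
        have hM4 : M ≤ 4 * m ^ 2 * c := by nlinarith [hMle, hA]
        by_cases hm2 : 2 ≤ m
        · -- far vertex case
          have hpt : ∀ s ∈ Set.Icc (0:ℝ) 1, c * m ^ 2 / 4 ≤ c * (s - s₀) ^ 2 + K := by
            intro s hs
            obtain ⟨hs0, hs1⟩ := hs
            have habs1 : |s₀| - 1 ≤ |s - s₀| := by
              have h1 := abs_sub_abs_le_abs_sub s₀ s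
              have h2 : |s| ≤ 1 := abs_le.mpr ⟨by linarith, hs1⟩
              rw [abs_sub_comm s₀ s] at h1
              linarith
            have habs2 : |1 - s₀| - 1 ≤ |s - s₀| := by
              have h1 := abs_sub_abs_le_abs_sub (1 - s₀) (1 - s)
              have h2 : |1 - s| ≤ 1 := abs_le.mpr ⟨by linarith, by linarith⟩
              have h3 : (1 - s₀) - (1 - s) = s - s₀ := by ring
              rw [h3] at h1
              linarith
            have hm1' : m - 1 ≤ |s - s₀| := by
              have : m ≤ |s - s₀| + 1 := by
                rw [hmdef]; exact max_le (by linarith) (by linarith)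
              linarith
            have hsq : m ^ 2 / 4 ≤ (s - s₀) ^ 2 := by
              nlinarith [sq_abs (s - s₀), abs_nonneg (s - s₀),
                mul_nonneg (by linarith : (0:ℝ) ≤ m) (by linarith : 0 ≤ |s - s₀| - m/2)]
            nlinarith
          have hcm4 : 0 < c * m ^ 2 / 4 := by positivity
          have hup1 : (∫ s in (0:ℝ)..1, (c * (s - s₀) ^ 2 + K) ^ σ) ≤ (c * m ^ 2 / 4) ^ σ := by
            have hconst : (∫ _s in (0:ℝ)..1, (c * m ^ 2 / 4) ^ σ) = (c * m ^ 2 / 4) ^ σ := by simp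
            rw [← hconst]
            apply intervalIntegral.integral_mono_on zero_le_one (hint 0 1) intervalIntegrable_const
            intro s hs
            exact Real.rpow_le_rpow_of_nonpos hcm4 (hpt s hs) hσ0.le
          have hup2 : (c * m ^ 2 / 4) ^ σ ≤ (M / 16) ^ σ :=
            Real.rpow_le_rpow_of_nonpos (by linarith) (by linarith) hσ0.le
          have hup3 : (M / 16) ^ σ ≤ 4 * M ^ σ :=
            seg_div_rpow_le σ M 16 4 hM (by norm_num)
              (seg_rpow_neg_le σ 16 4 hσ1 (by norm_num) (by norm_num) (by norm_num))
          have hup4 : 4 * M ^ σ ≤ 8 / (2 * σ + 1) * M ^ σ := by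
            have h := mul_le_mul_of_nonneg_right h8r hMσpos.le
            linarith
          linarith
        · push_neg at hm2
          have h4m : (1:ℝ) ≤ 4 * m ^ 2 := by nlinarith
          have h4m' : 4 * m ^ 2 ≤ 8 ^ 2 := by nlinarith
          have hMσ4 : (4 * m ^ 2) ^ σ * c ^ σ ≤ M ^ σ := by
            have h := Real.rpow_le_rpow_of_nonpos hM hM4 hσ0.le
            rwa [Real.mul_rpow (by positivity) hc0.le] at h
          have hcσ : 0 < c ^ σ := Real.rpow_pos_of_pos hc0 σ
          have h4mσ : 0 < (4 * m ^ 2) ^ σ := Real.rpow_pos_of_pos (by positivity) σ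
          have h8 : 1 ≤ 8 * (4 * m ^ 2) ^ σ := by
            have hle : (4 * m ^ 2) ^ (-σ) ≤ 8 :=
              seg_rpow_neg_le σ _ 8 hσ1 h4m (by norm_num) h4m'
            rw [Real.rpow_neg (by positivity)] at hle
            calc (1:ℝ) = (4 * m ^ 2) ^ σ * ((4 * m ^ 2) ^ σ)⁻¹ :=
                  (mul_inv_cancel₀ h4mσ.ne').symm
              _ ≤ (4 * m ^ 2) ^ σ * 8 := by gcongr
              _ = 8 * (4 * m ^ 2) ^ σ := by ring
          have hkey : c ^ σ ≤ 8 * M ^ σ := by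
            calc c ^ σ = 1 * c ^ σ := (one_mul _).symm
              _ ≤ (8 * (4 * m ^ 2) ^ σ) * c ^ σ := by gcongr
              _ = 8 * ((4 * m ^ 2) ^ σ * c ^ σ) := by ring
              _ ≤ 8 * M ^ σ := by linarith
          rcases le_or_gt s₀ 0 with hpos0 | hpos0
          · -- s₀ ≤ 0
            have hgint : IntervalIntegrable (fun s : ℝ => c ^ σ * s ^ (2*σ)) volume 0 1 :=
              (intervalIntegral.intervalIntegrable_rpow' h2σ).const_mul _
            have hmono : (∫ s in (0:ℝ)..1, (c * (s - s₀) ^ 2 + K) ^ σ)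
                ≤ ∫ s in (0:ℝ)..1, c ^ σ * s ^ (2*σ) := by
              apply intervalIntegral.integral_mono_ae_restrict zero_le_one (hint 0 1) hgint
              filter_upwards [ae_restrict_of_ae (seg_ae_ne 0), ae_restrict_mem measurableSet_Icc]
                with s hs hmem
              obtain ⟨hs0, hs1⟩ := hmem
              have hspos : 0 < s := lt_of_le_of_ne hs0 (Ne.symm hs)
              have hle : c * s ^ 2 ≤ c * (s - s₀) ^ 2 + K := by
                nlinarith [mul_nonneg (mul_nonneg hc0.le hspos.le) (neg_nonneg.mpr hpos0),
                  mul_nonneg hc0.le (sq_nonneg s₀), hK0]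
              calc (c * (s - s₀) ^ 2 + K) ^ σ ≤ (c * s ^ 2) ^ σ :=
                    Real.rpow_le_rpow_of_nonpos (by positivity) hle hσ0.le
                _ = c ^ σ * s ^ (2*σ) := by
                    rw [Real.mul_rpow hc0.le (sq_nonneg _), seg_sq_rpow s hspos.le]
            have hval : (∫ s in (0:ℝ)..1, c ^ σ * s ^ (2*σ)) = c ^ σ * (1/(2*σ+1)) := by
              rw [intervalIntegral.integral_const_mul, integral_rpow (Or.inl h2σ)]
              rw [Real.one_rpow, Real.zero_rpow hr0.ne']
              ring
            calc (∫ s in (0:ℝ)..1, (c * (s - s₀) ^ 2 + K) ^ σ)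
                ≤ ∫ s in (0:ℝ)..1, c ^ σ * s ^ (2*σ) := hmono
              _ = c ^ σ * (1/(2*σ+1)) := hval
              _ ≤ 8 / (2*σ+1) * M ^ σ := seg_last_step _ _ _ hr0 hkey
          · rcases le_or_gt 1 s₀ with hpos1 | hpos1
            · -- 1 ≤ s₀
              have hgint : IntervalIntegrable (fun s : ℝ => c ^ σ * (1 - s) ^ (2*σ)) volume 0 1 := by
                have hbase : IntervalIntegrable (fun x : ℝ => x ^ (2*σ)) volume 0 1 :=
                  intervalIntegral.intervalIntegrable_rpow' h2σ
                have h1 := hbase.comp_sub_left 1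
                simpa using h1.symm.const_mul (c ^ σ)
              have hmono : (∫ s in (0:ℝ)..1, (c * (s - s₀) ^ 2 + K) ^ σ)
                  ≤ ∫ s in (0:ℝ)..1, c ^ σ * (1 - s) ^ (2*σ) := by
                apply intervalIntegral.integral_mono_ae_restrict zero_le_one (hint 0 1) hgint
                filter_upwards [ae_restrict_of_ae (seg_ae_ne 1), ae_restrict_mem measurableSet_Icc]
                  with s hs hmem
                obtain ⟨hs0, hs1⟩ := hmem
                have hslt : s < 1 := lt_of_le_of_ne hs1 hs
                have hle : c * (1 - s) ^ 2 ≤ c * (s - s₀) ^ 2 + K := by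
                  nlinarith [mul_nonneg (by linarith : (0:ℝ) ≤ s₀ - 1)
                    (by linarith : (0:ℝ) ≤ s₀ + 1 - 2*s)]
                calc (c * (s - s₀) ^ 2 + K) ^ σ ≤ (c * (1 - s) ^ 2) ^ σ :=
                      Real.rpow_le_rpow_of_nonpos
                        (mul_pos hc0 (pow_pos (by linarith : (0:ℝ) < 1 - s) 2)) hle hσ0.le
                  _ = c ^ σ * (1 - s) ^ (2*σ) := by
                      rw [Real.mul_rpow hc0.le (sq_nonneg _),
                        seg_sq_rpow (1 - s) (by linarith)]
              have hval : (∫ s in (0:ℝ)..1, c ^ σ * (1 - s) ^ (2*σ)) = c ^ σ * (1/(2*σ+1)) := by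
                rw [intervalIntegral.integral_const_mul,
                  intervalIntegral.integral_comp_sub_left (fun x : ℝ => x ^ (2*σ)) 1,
                  show (1:ℝ) - 1 = 0 by norm_num, show (1:ℝ) - 0 = 1 by norm_num,
                  integral_rpow (Or.inl h2σ), Real.one_rpow, Real.zero_rpow hr0.ne']
                ring
              calc (∫ s in (0:ℝ)..1, (c * (s - s₀) ^ 2 + K) ^ σ)
                  ≤ ∫ s in (0:ℝ)..1, c ^ σ * (1 - s) ^ (2*σ) := hmono
                _ = c ^ σ * (1/(2*σ+1)) := hval
                _ ≤ 8 / (2*σ+1) * M ^ σ := seg_last_step _ _ _ hr0 hkey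
            · -- 0 < s₀ < 1
              have hmle1 : m ≤ 1 := by
                rw [hmdef]
                apply max_le
                · rw [abs_of_pos hpos0]; linarith
                · rw [abs_of_pos (by linarith : (0:ℝ) < 1 - s₀)]; linarith
              -- piece 1 : [0, s₀]
              have hg1int : IntervalIntegrable (fun s : ℝ => c ^ σ * (s₀ - s) ^ (2*σ))
                  volume 0 s₀ := by
                have hbase : IntervalIntegrable (fun x : ℝ => x ^ (2*σ)) volume 0 s₀ :=
                  intervalIntegral.intervalIntegrable_rpow' h2σ
                have h1 := hbase.comp_sub_left s₀
                simpa using h1.symm.const_mul (c ^ σ)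
              have hmono1 : (∫ s in (0:ℝ)..s₀, (c * (s - s₀) ^ 2 + K) ^ σ)
                  ≤ ∫ s in (0:ℝ)..s₀, c ^ σ * (s₀ - s) ^ (2*σ) := by
                apply intervalIntegral.integral_mono_ae_restrict hpos0.le (hint 0 s₀) hg1int
                filter_upwards [ae_restrict_of_ae (seg_ae_ne s₀),
                  ae_restrict_mem measurableSet_Icc] with s hs hmem
                obtain ⟨hs0, hs1⟩ := hmem
                have hslt : s < s₀ := lt_of_le_of_ne hs1 hs
                have hle : c * (s₀ - s) ^ 2 ≤ c * (s - s₀) ^ 2 + K := by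
                  have heq : c * (s₀ - s) ^ 2 = c * (s - s₀) ^ 2 := by ring
                  linarith
                calc (c * (s - s₀) ^ 2 + K) ^ σ ≤ (c * (s₀ - s) ^ 2) ^ σ :=
                      Real.rpow_le_rpow_of_nonpos
                        (mul_pos hc0 (pow_pos (by linarith : (0:ℝ) < s₀ - s) 2)) hle hσ0.le
                  _ = c ^ σ * (s₀ - s) ^ (2*σ) := by
                      rw [Real.mul_rpow hc0.le (sq_nonneg _), seg_sq_rpow (s₀ - s) (by linarith)]
              have hval1 : (∫ s in (0:ℝ)..s₀, c ^ σ * (s₀ - s) ^ (2*σ))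
                  = c ^ σ * (s₀ ^ (2*σ+1) / (2*σ+1)) := by
                rw [intervalIntegral.integral_const_mul,
                  intervalIntegral.integral_comp_sub_left (fun x : ℝ => x ^ (2*σ)) s₀,
                  show s₀ - s₀ = 0 by ring, show s₀ - (0:ℝ) = s₀ by ring,
                  integral_rpow (Or.inl h2σ), Real.zero_rpow hr0.ne']
                ring
              -- piece 2 : [s₀, 1]
              have hg2int : IntervalIntegrable (fun s : ℝ => c ^ σ * (s - s₀) ^ (2*σ))
                  volume s₀ 1 := by
                have hbase : IntervalIntegrable (fun x : ℝ => x ^ (2*σ)) volume 0 (1 - s₀) :=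
                  intervalIntegral.intervalIntegrable_rpow' h2σ
                have h1 := hbase.comp_sub_right s₀
                simpa using h1.const_mul (c ^ σ)
              have hmono2 : (∫ s in s₀..(1:ℝ), (c * (s - s₀) ^ 2 + K) ^ σ)
                  ≤ ∫ s in s₀..(1:ℝ), c ^ σ * (s - s₀) ^ (2*σ) := by
                apply intervalIntegral.integral_mono_ae_restrict hpos1.le (hint s₀ 1) hg2int
                filter_upwards [ae_restrict_of_ae (seg_ae_ne s₀),
                  ae_restrict_mem measurableSet_Icc] with s hs hmem
                obtain ⟨hs0, hs1⟩ := hmem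
                have hslt : s₀ < s := lt_of_le_of_ne hs0 (Ne.symm hs)
                have hle : c * (s - s₀) ^ 2 ≤ c * (s - s₀) ^ 2 + K :=
                  le_add_of_nonneg_right hK0
                calc (c * (s - s₀) ^ 2 + K) ^ σ ≤ (c * (s - s₀) ^ 2) ^ σ :=
                      Real.rpow_le_rpow_of_nonpos
                        (mul_pos hc0 (pow_pos (by linarith : (0:ℝ) < s - s₀) 2)) hle hσ0.le
                  _ = c ^ σ * (s - s₀) ^ (2*σ) := by
                      rw [Real.mul_rpow hc0.le (sq_nonneg _), seg_sq_rpow (s - s₀) (by linarith)]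
              have hval2 : (∫ s in s₀..(1:ℝ), c ^ σ * (s - s₀) ^ (2*σ))
                  = c ^ σ * ((1 - s₀) ^ (2*σ+1) / (2*σ+1)) := by
                rw [intervalIntegral.integral_const_mul,
                  intervalIntegral.integral_comp_sub_right (fun x : ℝ => x ^ (2*σ)) s₀,
                  show s₀ - s₀ = 0 by ring, show (1:ℝ) - s₀ = 1 - s₀ by ring,
                  integral_rpow (Or.inl h2σ), Real.zero_rpow hr0.ne']
                ring
              have hsplit := intervalIntegral.integral_add_adjacent_intervals
                (hint 0 s₀) (hint s₀ 1)
              -- bound the sum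
              have hrnn : (0:ℝ) ≤ 2*σ+1 := hr0.le
              have hb1 : s₀ ^ (2*σ+1) ≤ m ^ (2*σ+1) := by
                apply Real.rpow_le_rpow hpos0.le _ hrnn
                calc s₀ = |s₀| := (abs_of_pos hpos0).symm
                  _ ≤ m := hm0
              have hb2 : (1 - s₀) ^ (2*σ+1) ≤ m ^ (2*σ+1) := by
                apply Real.rpow_le_rpow (by linarith) _ hrnn
                calc 1 - s₀ = |1 - s₀| := (abs_of_pos (by linarith)).symm
                  _ ≤ m := hm1
              have hmr : m ^ (2*σ+1) ≤ m ^ (2*σ) := by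
                rw [Real.rpow_add hmpos, Real.rpow_one]
                exact mul_le_of_le_one_right (Real.rpow_nonneg hmpos.le _) hmle1
              have hmσpos : 0 < m ^ (2*σ) := Real.rpow_pos_of_pos hmpos _
              have hkey2 : c ^ σ * (2 * m ^ (2*σ)) ≤ 8 * M ^ σ := by
                have h4σ : (4:ℝ) ^ (-σ) ≤ 4 :=
                  seg_rpow_neg_le σ 4 4 hσ1 (by norm_num) (by norm_num) (by norm_num)
                have h4σpos : (0:ℝ) < (4:ℝ) ^ σ := Real.rpow_pos_of_pos (by norm_num) σ
                rw [Real.rpow_neg (by norm_num : (0:ℝ) ≤ 4)] at h4σ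
                have h2le : 2 ≤ 8 * (4:ℝ) ^ σ := by
                  have h1 : (1:ℝ) = (4:ℝ) ^ σ * ((4:ℝ) ^ σ)⁻¹ := (mul_inv_cancel₀ h4σpos.ne').symm
                  have h2 : (4:ℝ) ^ σ * ((4:ℝ) ^ σ)⁻¹ ≤ (4:ℝ) ^ σ * 4 := by gcongr
                  linarith
                have hM4σ : 4 ^ σ * m ^ (2*σ) * c ^ σ ≤ M ^ σ := by
                  have : (4 * m ^ 2) ^ σ = 4 ^ σ * m ^ (2*σ) := by
                    rw [Real.mul_rpow (by norm_num) (sq_nonneg m), seg_sq_rpow m hmpos.le]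
                  rw [← this]; exact hMσ4
                have hmc : (0:ℝ) < m ^ (2*σ) * c ^ σ := mul_pos hmσpos hcσ
                have h3 := mul_le_mul_of_nonneg_right h2le hmc.le
                have h4 := mul_le_mul_of_nonneg_left hM4σ (by norm_num : (0:ℝ) ≤ 8)
                have heq1 : 2 * (m ^ (2*σ) * c ^ σ) = c ^ σ * (2 * m ^ (2*σ)) := by ring
                have heq2 : 8 * (4:ℝ) ^ σ * (m ^ (2*σ) * c ^ σ)
                    = 8 * (4 ^ σ * m ^ (2*σ) * c ^ σ) := by ring
                linarith
              calc (∫ s in (0:ℝ)..1, (c * (s - s₀) ^ 2 + K) ^ σ)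
                  = (∫ s in (0:ℝ)..s₀, (c * (s - s₀) ^ 2 + K) ^ σ)
                    + ∫ s in s₀..(1:ℝ), (c * (s - s₀) ^ 2 + K) ^ σ := hsplit.symm
                _ ≤ c ^ σ * (s₀ ^ (2*σ+1) / (2*σ+1))
                    + c ^ σ * ((1 - s₀) ^ (2*σ+1) / (2*σ+1)) := by
                    rw [← hval1, ← hval2]; exact add_le_add hmono1 hmono2
                _ = (c ^ σ * (s₀ ^ (2*σ+1) + (1 - s₀) ^ (2*σ+1))) * (1/(2*σ+1)) := by ring
                _ ≤ (c ^ σ * (2 * m ^ (2*σ))) * (1/(2*σ+1)) := by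
                    have : s₀ ^ (2*σ+1) + (1 - s₀) ^ (2*σ+1) ≤ 2 * m ^ (2*σ) := by linarith
                    have h1r : (0:ℝ) ≤ 1/(2*σ+1) := by positivity
                    exact mul_le_mul_of_nonneg_right
                      (mul_le_mul_of_nonneg_left this hcσ.le) h1r
                _ ≤ 8 / (2*σ+1) * M ^ σ := seg_last_step _ _ _ hr0 hkey2

/-- Lemma 2.5 (Hamburger): for `σ ∈ (-1/2, 0)`, `μ ≥ 0` and `A, Ã ∈ ℝ^{Nn}`
(not both zero together with `μ`), the quotient
`(∫₀¹ (μ² + |A + s(Ã - A)|²)^σ ds) / (μ² + |A|² + |Ã|²)^σ` lies in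
`[1, 8/(2σ+1)]`. -/
theorem segment_integral_comparison (N n : ℕ) (σ μ : ℝ)
    (hσ : σ ∈ Set.Ioo (-(1 / 2) : ℝ) 0) (hμ : 0 ≤ μ)
    (A Atil : EuclideanSpace ℝ (Fin (N * n)))
    (hne : μ ≠ 0 ∨ A ≠ 0 ∨ Atil ≠ 0) :
    (∫ s in (0 : ℝ)..1, (μ ^ 2 + ‖A + s • (Atil - A)‖ ^ 2) ^ σ) /
        (μ ^ 2 + ‖A‖ ^ 2 + ‖Atil‖ ^ 2) ^ σ ∈
      Set.Icc (1 : ℝ) (8 / (2 * σ + 1)) := by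
  obtain ⟨hσ1, hσ0⟩ := hσ
  set B := Atil - A with hB
  set t := μ ^ 2 with htdef
  set a := ‖A‖ ^ 2 with hadef
  set b : ℝ := inner ℝ A B with hbdef
  set c := ‖B‖ ^ 2 with hcdef
  have hpt : ∀ s : ℝ, t + ‖A + s • B‖ ^ 2 = t + (a + 2 * b * s + c * s ^ 2) := by
    intro s
    rw [htdef, hadef, hbdef, hcdef, norm_add_sq_real, real_inner_smul_right, norm_smul,
      Real.norm_eq_abs, mul_pow, sq_abs]
    ring
  have hAtil : ‖Atil‖ ^ 2 = a + 2 * b + c := by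
    have hA' : Atil = A + B := by rw [hB]; abel
    rw [hA', norm_add_sq_real, hadef, hbdef, hcdef]
  have hta : 0 ≤ t := sq_nonneg μ
  have haa : 0 ≤ a := by rw [hadef]; positivity
  have hcc : 0 ≤ c := by rw [hcdef]; positivity
  have hcs : b ^ 2 ≤ a * c := by
    have h := real_inner_mul_inner_self_le A B
    rw [real_inner_self_eq_norm_sq, real_inner_self_eq_norm_sq] at h
    rw [hbdef, hadef, hcdef, sq]
    exact h
  have habc : 0 ≤ a + 2 * b + c := by rw [← hAtil]; positivity
  have hM : 0 < t + a + (a + 2 * b + c) := by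
    rw [← hAtil]
    have h1 : 0 ≤ ‖Atil‖ ^ 2 := by positivity
    rcases hne with h | h | h
    · have : 0 < t := by rw [htdef]; positivity
      linarith
    · have : 0 < a := by
        rw [hadef]
        exact pow_pos (norm_pos_iff.mpr h) 2
      linarith
    · have : 0 < ‖Atil‖ ^ 2 := pow_pos (norm_pos_iff.mpr h) 2
      linarith
  obtain ⟨hlo, hhi⟩ := seg_quad_bounds σ t a b c hσ1 hσ0 hta haa hcc hcs habc hM
  have hMσpos : 0 < (t + a + (a + 2 * b + c)) ^ σ :=
    Real.rpow_pos_of_pos hM σ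
  rw [hAtil]
  simp_rw [hpt]
  rw [Set.mem_Icc]
  constructor
  · rw [le_div_iff₀ hMσpos]
    linarith
  · rw [div_le_iff₀ hMσpos]
    exact hhi
end

section
/- For every σ ∈ (-1/2, 0) and μ ≥ 0, and for any A, B ∈ ℝ^(Nn) not both zero if μ = 0, there holds ∫₀¹ (μ² + |A + sB|²)^σ ds ≤ (24/(2σ+1)) (μ² + |A|² + |B|²)^σ. -/
open MeasureTheory intervalIntegral Real

set_option maxHeartbeats 1000000 in
lemma quad_bound (σ a b β : ℝ) (hσ : σ ∈ Set.Ioo (-(1/2) : ℝ) 0)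
    (ha : 0 ≤ a) (hb : 0 ≤ b) (hβ : β ^ 2 ≤ a * b) (hab : 0 < a + b) :
    (∫ s in (0:ℝ)..1, (a + 2 * β * s + b * s ^ 2) ^ σ) ≤
      (24 / (2 * σ + 1)) * (a + b) ^ σ := by
  obtain ⟨hσl, hσ0⟩ := hσ
  have h2σ : (0:ℝ) < 2 * σ + 1 := by linarith
  have h2σ' : (-1:ℝ) < 2 * σ := by linarith
  have habσ : 0 < (a + b) ^ σ := Real.rpow_pos_of_pos hab σ
  have hcoef : (24:ℝ) ≤ 24 / (2 * σ + 1) := by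
    rw [le_div_iff₀ h2σ]; nlinarith
  rcases eq_or_lt_of_le hb with hb0 | hb0
  · -- b = 0
    have hβ0 : β = 0 := by nlinarith
    have : ∀ s : ℝ, a + 2 * β * s + b * s ^ 2 = a := by
      intro s; rw [hβ0, ← hb0]; ring
    simp_rw [this]
    rw [intervalIntegral.integral_const]
    have : a + b = a := by rw [← hb0]; ring
    rw [this] at habσ ⊢
    simp only [sub_zero, smul_eq_mul, one_mul]
    nlinarith
  · -- b > 0
    obtain ⟨t₀, ht00, ht01, hkey, hMa⟩ :
        ∃ t₀ : ℝ, 0 ≤ t₀ ∧ t₀ ≤ 1 ∧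
          (∀ s, 0 ≤ s → s ≤ 1 →
            b * (s - t₀) ^ 2 + (a + 2 * β * t₀ + b * t₀ ^ 2)
              ≤ a + 2 * β * s + b * s ^ 2) ∧
          a + b ≤ 3 * (b + (a + 2 * β * t₀ + b * t₀ ^ 2)) := by
      rcases le_or_gt 0 β with hβs | hβs
      · exact ⟨0, le_refl 0, zero_le_one,
          fun s h0 h1 => by nlinarith, by nlinarith⟩
      rcases le_or_gt β (-b) with hβb | hβb
      · refine ⟨1, zero_le_one, le_refl 1, fun s h0 h1 => by nlinarith, ?_⟩
        nlinarith [sq_nonneg (2 * β + 3 * b)]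
      · refine ⟨-β / b, div_nonneg (by linarith) hb0.le,
          by rw [div_le_one hb0]; linarith, ?_, ?_⟩
        · intro s h0 h1
          have : b * (s - -β / b) ^ 2 + (a + 2 * β * (-β / b) + b * (-β / b) ^ 2)
              = a + 2 * β * s + b * s ^ 2 := by field_simp; ring
          linarith [this.le]
        · have h1 : β ^ 2 ≤ b ^ 2 := by nlinarith
          have : a + 2 * β * (-β / b) + b * (-β / b) ^ 2 = a - β ^ 2 / b := by
            field_simp; ring
          rw [this]
          rw [show (3:ℝ) * (b + (a - β ^ 2 / b)) = 3 * b + 3 * a - 3 * (β ^ 2 / b) by ring]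
          have h3 : 3 * (β ^ 2 / b) ≤ 2 * a + b := by
            rw [show 3 * (β ^ 2 / b) = 3 * β ^ 2 / b from by ring, div_le_iff₀ hb0]
            nlinarith
          linarith
    set c₁ := a + 2 * β * t₀ + b * t₀ ^ 2 with hc₁def
    have hc₁ : 0 ≤ c₁ := by nlinarith [sq_nonneg (b * t₀ + β)]
    rcases le_or_gt b c₁ with hcb | hcb
    · -- Case A : b ≤ c₁, integrand bounded by c₁ ^ σ
      have hc₁pos : 0 < c₁ := by nlinarith
      have hq_lb : ∀ s ∈ Set.Icc (0:ℝ) 1, c₁ ≤ a + 2 * β * s + b * s ^ 2 := by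
        intro s hs
        have := hkey s hs.1 hs.2
        nlinarith [sq_nonneg (s - t₀)]
      have hcont : ContinuousOn (fun s : ℝ => (a + 2 * β * s + b * s ^ 2) ^ σ)
          (Set.Icc 0 1) := by
        apply ContinuousOn.rpow_const
        · fun_prop
        · intro x hx
          exact Or.inl (ne_of_gt (lt_of_lt_of_le hc₁pos (hq_lb x hx)))
      have hint : IntervalIntegrable (fun s : ℝ => (a + 2 * β * s + b * s ^ 2) ^ σ)
          volume 0 1 := by
        rw [show Set.Icc (0:ℝ) 1 = Set.uIcc 0 1 from (Set.uIcc_of_le zero_le_one).symm] at hcont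
        exact hcont.intervalIntegrable
      have h1 : (∫ s in (0:ℝ)..1, (a + 2 * β * s + b * s ^ 2) ^ σ)
          ≤ ∫ _s in (0:ℝ)..1, c₁ ^ σ := by
        apply intervalIntegral.integral_mono_on zero_le_one hint
          intervalIntegrable_const
        intro s hs
        exact Real.rpow_le_rpow_of_nonpos hc₁pos (hq_lb s hs) hσ0.le
      rw [intervalIntegral.integral_const] at h1
      simp only [sub_zero, smul_eq_mul, one_mul] at h1
      have h2 : c₁ ^ σ ≤ ((a + b) / 6) ^ σ := by
        apply Real.rpow_le_rpow_of_nonpos (by positivity) (by linarith) hσ0.le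
      have h3 : ((a + b) / 6) ^ σ ≤ 6 * (a + b) ^ σ := by
        rw [Real.div_rpow hab.le (by norm_num : (0:ℝ) ≤ 6)]
        have h6 : (6:ℝ) ^ (-1:ℝ) ≤ 6 ^ σ :=
          Real.rpow_le_rpow_of_exponent_le (by norm_num) (by linarith)
        rw [Real.rpow_neg_one] at h6
        rw [div_le_iff₀ (by positivity : (0:ℝ) < 6 ^ σ)]
        calc (a + b) ^ σ = 6 * (a + b) ^ σ * 6⁻¹ := by ring
          _ ≤ 6 * (a + b) ^ σ * 6 ^ σ :=
            mul_le_mul_of_nonneg_left h6 (by positivity)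
      have h4 : 6 * (a + b) ^ σ ≤ 24 / (2 * σ + 1) * (a + b) ^ σ :=
        mul_le_mul_of_nonneg_right (by linarith) habσ.le
      linarith
    · -- Case B : c₁ < b
      obtain ⟨t₁, ht₁0, ht₁sq, ht₁1⟩ :
          ∃ t₁ : ℝ, 0 ≤ t₁ ∧ b * t₁ ^ 2 = c₁ ∧ t₁ ≤ 1 := by
        refine ⟨Real.sqrt (c₁ / b), Real.sqrt_nonneg _, ?_, ?_⟩
        · rw [Real.sq_sqrt (div_nonneg hc₁ hb0.le)]
          field_simp
        · rw [show (1:ℝ) = Real.sqrt 1 from Real.sqrt_one.symm]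
          apply Real.sqrt_le_sqrt
          rw [div_le_one hb0]; linarith
      have h6b : a + b ≤ 6 * b := by linarith
      obtain ⟨L, hLdef⟩ : ∃ L : ℝ, L = (a + b) / 12 := ⟨_, rfl⟩
      have hL : 0 < L := by rw [hLdef]; positivity
      obtain ⟨g, hgdef⟩ :
          ∃ g : ℝ → ℝ, g = fun s => L ^ σ * (|s - t₀| + t₁) ^ ((2:ℝ) * σ) := ⟨_, rfl⟩
      have hgs : ∀ s : ℝ, g s = L ^ σ * (|s - t₀| + t₁) ^ ((2:ℝ) * σ) := fun s => by
        rw [hgdef]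
      have hptw : ∀ s, 0 ≤ s → s ≤ 1 →
          (a + 2 * β * s + b * s ^ 2) ^ σ ≤ g s := by
        intro s h0 h1
        have hk := hkey s h0 h1
        have hlow : L * (|s - t₀| + t₁) ^ 2 ≤ a + 2 * β * s + b * s ^ 2 := by
          have hx2 : (|s - t₀| + t₁) ^ 2 ≤ 2 * (s - t₀) ^ 2 + 2 * t₁ ^ 2 := by
            nlinarith [sq_nonneg (|s - t₀| - t₁), sq_abs (s - t₀)]
          have hLb : L ≤ b / 2 := by rw [hLdef]; linarith
          have hstep : L * (|s - t₀| + t₁) ^ 2 ≤ (b / 2) * (2 * (s - t₀) ^ 2 + 2 * t₁ ^ 2) :=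
            mul_le_mul hLb hx2 (sq_nonneg _) (by linarith)
          have : (b / 2) * (2 * (s - t₀) ^ 2 + 2 * t₁ ^ 2) = b * (s - t₀) ^ 2 + b * t₁ ^ 2 := by
            ring
          rw [this, ht₁sq] at hstep
          linarith
        have hxt : 0 ≤ |s - t₀| + t₁ := add_nonneg (abs_nonneg _) ht₁0
        rcases eq_or_lt_of_le hxt with hz | hz
        · have habs0 : |s - t₀| = 0 := by
            have h' := abs_nonneg (s - t₀); linarith
          have ht₁z : t₁ = 0 := by
            have h' := abs_nonneg (s - t₀); linarith
          have hq0 : a + 2 * β * s + b * s ^ 2 = 0 := by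
            have hst : s = t₀ := by have := abs_eq_zero.mp habs0; linarith
            have hc₁0 : c₁ = 0 := by rw [← ht₁sq, ht₁z]; ring
            rw [hst, ← hc₁def, hc₁0]
          rw [hq0, Real.zero_rpow (ne_of_lt hσ0), hgs s, ← hz,
            Real.zero_rpow (by intro h; nlinarith : (2:ℝ) * σ ≠ 0), mul_zero]
        · have hpos : 0 < L * (|s - t₀| + t₁) ^ 2 := mul_pos hL (by positivity)
          have hle := Real.rpow_le_rpow_of_nonpos hpos hlow hσ0.le
          calc (a + 2 * β * s + b * s ^ 2) ^ σ ≤ (L * (|s - t₀| + t₁) ^ 2) ^ σ := hle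
            _ = g s := by
                rw [hgs s, Real.mul_rpow hL.le (sq_nonneg _),
                  ← Real.rpow_natCast (|s - t₀| + t₁) 2,
                  ← Real.rpow_mul hxt]
                norm_num
      -- integrability of the two smooth pieces
      have hII1 : IntervalIntegrable (fun s : ℝ => (t₀ + t₁ - s) ^ ((2:ℝ) * σ))
          volume 0 t₀ := by
        have h := (intervalIntegrable_rpow' (a := t₀ + t₁) (b := t₁) h2σ').comp_sub_left
          (t₀ + t₁)
        rw [show t₀ + t₁ - (t₀ + t₁) = 0 by ring, show t₀ + t₁ - t₁ = t₀ by ring] at h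
        exact h
      have hII2 : IntervalIntegrable (fun s : ℝ => (s - (t₀ - t₁)) ^ ((2:ℝ) * σ))
          volume t₀ 1 := by
        have h := (intervalIntegrable_rpow' (a := t₁) (b := 1 - t₀ + t₁) h2σ').comp_sub_right
          (t₀ - t₁)
        rw [show t₁ + (t₀ - t₁) = t₀ by ring, show 1 - t₀ + t₁ + (t₀ - t₁) = 1 by ring] at h
        exact h
      -- equality of g with the smooth pieces on the two subintervals
      have hgeq1 : Set.EqOn (fun s : ℝ => L ^ σ * (t₀ + t₁ - s) ^ ((2:ℝ) * σ)) g
          (Set.uIcc 0 t₀) := by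
        intro s hs
        rw [Set.uIcc_of_le ht00] at hs
        have habs : |s - t₀| = t₀ - s := by
          rw [abs_of_nonpos (by linarith [hs.2] : s - t₀ ≤ 0)]; ring
        rw [hgs s, habs, show t₀ - s + t₁ = t₀ + t₁ - s by ring]
      have hgeq2 : Set.EqOn (fun s : ℝ => L ^ σ * (s - (t₀ - t₁)) ^ ((2:ℝ) * σ)) g
          (Set.uIcc t₀ 1) := by
        intro s hs
        rw [Set.uIcc_of_le ht01] at hs
        have habs : |s - t₀| = s - t₀ := abs_of_nonneg (by linarith [hs.1])
        rw [hgs s, habs, show s - t₀ + t₁ = s - (t₀ - t₁) by ring]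
      have hg1 : IntervalIntegrable g volume 0 t₀ := by
        rw [intervalIntegrable_iff_integrableOn_Ioc_of_le ht00]
        exact ((hII1.const_mul (L ^ σ)).1).congr_fun
          (hgeq1.mono (by rw [Set.uIcc_of_le ht00]; exact Set.Ioc_subset_Icc_self)) measurableSet_Ioc
      have hg2 : IntervalIntegrable g volume t₀ 1 := by
        rw [intervalIntegrable_iff_integrableOn_Ioc_of_le ht01]
        exact ((hII2.const_mul (L ^ σ)).1).congr_fun
          (hgeq2.mono (by rw [Set.uIcc_of_le ht01]; exact Set.Ioc_subset_Icc_self)) measurableSet_Ioc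
      have hg01 : IntervalIntegrable g volume 0 1 := hg1.trans hg2
      -- monotone comparison with the majorant g
      have hmain : (∫ s in (0:ℝ)..1, (a + 2 * β * s + b * s ^ 2) ^ σ)
          ≤ ∫ s in (0:ℝ)..1, g s := by
        rw [intervalIntegral.integral_of_le zero_le_one,
          intervalIntegral.integral_of_le zero_le_one]
        apply MeasureTheory.integral_mono_of_nonneg
        · filter_upwards [ae_restrict_mem measurableSet_Ioc] with s hs
          have hk := hkey s hs.1.le hs.2
          have hq : 0 ≤ a + 2 * β * s + b * s ^ 2 := by
            nlinarith [sq_nonneg (s - t₀)]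
          exact Real.rpow_nonneg hq σ
        · exact (intervalIntegrable_iff_integrableOn_Ioc_of_le zero_le_one).mp hg01
        · filter_upwards [ae_restrict_mem measurableSet_Ioc] with s hs
          exact hptw s hs.1.le hs.2
      have hsplit : (∫ s in (0:ℝ)..1, g s)
          = (∫ s in (0:ℝ)..t₀, g s) + ∫ s in t₀..(1:ℝ), g s :=
        (intervalIntegral.integral_add_adjacent_intervals hg1 hg2).symm
      -- bound the two pieces
      have hV1 : (∫ s in (0:ℝ)..t₀, (t₀ + t₁ - s) ^ ((2:ℝ) * σ)) ≤ 2 / (2 * σ + 1) := by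
        rw [intervalIntegral.integral_comp_sub_left (fun x : ℝ => x ^ ((2:ℝ) * σ)) (t₀ + t₁)]
        rw [show t₀ + t₁ - t₀ = t₁ by ring, sub_zero, integral_rpow (Or.inl h2σ')]
        have e1 : (t₀ + t₁) ^ (2 * σ + 1) ≤ 2 := by
          calc (t₀ + t₁) ^ (2 * σ + 1) ≤ 2 ^ (2 * σ + 1) :=
              Real.rpow_le_rpow (by linarith) (by linarith) (by linarith)
            _ ≤ 2 ^ (1:ℝ) := Real.rpow_le_rpow_of_exponent_le one_le_two (by linarith)
            _ = 2 := Real.rpow_one 2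
        have e2 : 0 ≤ t₁ ^ (2 * σ + 1) := Real.rpow_nonneg ht₁0 _
        rw [div_le_div_iff₀ h2σ h2σ]
        nlinarith
      have hV2 : (∫ s in t₀..(1:ℝ), (s - (t₀ - t₁)) ^ ((2:ℝ) * σ)) ≤ 2 / (2 * σ + 1) := by
        rw [intervalIntegral.integral_comp_sub_right (fun x : ℝ => x ^ ((2:ℝ) * σ)) (t₀ - t₁)]
        rw [show t₀ - (t₀ - t₁) = t₁ by ring, show 1 - (t₀ - t₁) = 1 - t₀ + t₁ by ring,
          integral_rpow (Or.inl h2σ')]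
        have e1 : (1 - t₀ + t₁) ^ (2 * σ + 1) ≤ 2 := by
          calc (1 - t₀ + t₁) ^ (2 * σ + 1) ≤ 2 ^ (2 * σ + 1) :=
              Real.rpow_le_rpow (by linarith) (by linarith) (by linarith)
            _ ≤ 2 ^ (1:ℝ) := Real.rpow_le_rpow_of_exponent_le one_le_two (by linarith)
            _ = 2 := Real.rpow_one 2
        have e2 : 0 ≤ t₁ ^ (2 * σ + 1) := Real.rpow_nonneg ht₁0 _
        rw [div_le_div_iff₀ h2σ h2σ]
        nlinarith
      have hgv1 : (∫ s in (0:ℝ)..t₀, g s) ≤ L ^ σ * (2 / (2 * σ + 1)) := by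
        rw [← intervalIntegral.integral_congr hgeq1, intervalIntegral.integral_const_mul]
        exact mul_le_mul_of_nonneg_left hV1 (Real.rpow_nonneg hL.le σ)
      have hgv2 : (∫ s in t₀..(1:ℝ), g s) ≤ L ^ σ * (2 / (2 * σ + 1)) := by
        rw [← intervalIntegral.integral_congr hgeq2, intervalIntegral.integral_const_mul]
        exact mul_le_mul_of_nonneg_left hV2 (Real.rpow_nonneg hL.le σ)
      -- size of L ^ σ
      have h12 : (6:ℝ)⁻¹ ≤ 12 ^ σ := by
        have hs12 : Real.sqrt 12 ≤ 6 := by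
          rw [show (6:ℝ) = Real.sqrt 36 from by
            rw [show (36:ℝ) = 6 ^ 2 by norm_num, Real.sqrt_sq (by norm_num : (0:ℝ) ≤ 6)]]
          exact Real.sqrt_le_sqrt (by norm_num)
        have h1 : (12:ℝ) ^ (-(1/2):ℝ) ≤ 12 ^ σ :=
          Real.rpow_le_rpow_of_exponent_le (by norm_num) hσl.le
        have h2 : (12:ℝ) ^ (-(1/2):ℝ) = (Real.sqrt 12)⁻¹ := by
          rw [Real.rpow_neg (by norm_num : (0:ℝ) ≤ 12), ← Real.sqrt_eq_rpow]
        have h3 : (6:ℝ)⁻¹ ≤ (Real.sqrt 12)⁻¹ := by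
          apply inv_anti₀ _ hs12
          exact Real.sqrt_pos.mpr (by norm_num)
        rw [h2] at h1
        linarith
      have hLσ : L ^ σ ≤ 6 * (a + b) ^ σ := by
        rw [hLdef, Real.div_rpow hab.le (by norm_num : (0:ℝ) ≤ 12),
          div_le_iff₀ (by positivity : (0:ℝ) < (12:ℝ) ^ σ)]
        calc (a + b) ^ σ = 6 * (a + b) ^ σ * 6⁻¹ := by ring
          _ ≤ 6 * (a + b) ^ σ * 12 ^ σ :=
            mul_le_mul_of_nonneg_left h12 (by positivity)
      -- final assembly
      have hLσpos : 0 < L ^ σ := Real.rpow_pos_of_pos hL σ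
      calc (∫ s in (0:ℝ)..1, (a + 2 * β * s + b * s ^ 2) ^ σ)
          ≤ ∫ s in (0:ℝ)..1, g s := hmain
        _ = (∫ s in (0:ℝ)..t₀, g s) + ∫ s in t₀..(1:ℝ), g s := hsplit
        _ ≤ L ^ σ * (2 / (2 * σ + 1)) + L ^ σ * (2 / (2 * σ + 1)) := add_le_add hgv1 hgv2
        _ = L ^ σ * (4 / (2 * σ + 1)) := by ring
        _ ≤ (6 * (a + b) ^ σ) * (4 / (2 * σ + 1)) :=
            mul_le_mul_of_nonneg_right hLσ (by positivity)
        _ = 24 / (2 * σ + 1) * (a + b) ^ σ := by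
            field_simp
            ring


/-- Inequality (2.6): for `σ ∈ (-1/2, 0)`, `μ ≥ 0` and `A, B ∈ ℝ^{Nn}`
(not both zero if `μ = 0`),
`∫₀¹ (μ² + |A + sB|²)^σ ds ≤ (24/(2σ+1)) (μ² + |A|² + |B|²)^σ`. -/
theorem segment_integral_upper_bound (N n : ℕ) (σ μ : ℝ)
    (hσ : σ ∈ Set.Ioo (-(1 / 2) : ℝ) 0) (hμ : 0 ≤ μ)
    (A B : EuclideanSpace ℝ (Fin (N * n)))
    (hne : μ ≠ 0 ∨ A ≠ 0 ∨ B ≠ 0) :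
    (∫ s in (0 : ℝ)..1, (μ ^ 2 + ‖A + s • B‖ ^ 2) ^ σ) ≤
      (24 / (2 * σ + 1)) * (μ ^ 2 + ‖A‖ ^ 2 + ‖B‖ ^ 2) ^ σ := by
  have hexp : ∀ s : ℝ, μ ^ 2 + ‖A + s • B‖ ^ 2
      = μ ^ 2 + ‖A‖ ^ 2 + 2 * (inner ℝ A B : ℝ) * s + ‖B‖ ^ 2 * s ^ 2 := by
    intro s
    rw [norm_add_sq_real, real_inner_smul_right, norm_smul]
    simp only [Real.norm_eq_abs, mul_pow, sq_abs]
    ring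
  simp_rw [hexp]
  apply quad_bound σ (μ ^ 2 + ‖A‖ ^ 2) (‖B‖ ^ 2) (inner ℝ A B) hσ (by positivity)
    (sq_nonneg _)
  · have h := real_inner_mul_inner_self_le A B
    rw [real_inner_self_eq_norm_sq, real_inner_self_eq_norm_sq] at h
    nlinarith [sq_nonneg μ, sq_nonneg (‖B‖)]
  · rcases hne with h | h | h
    · have : 0 < μ ^ 2 := pow_pos (hμ.lt_of_ne (Ne.symm h)) 2
      nlinarith [sq_nonneg ‖A‖, sq_nonneg ‖B‖]
    · have : 0 < ‖A‖ := norm_pos_iff.mpr h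
      nlinarith [sq_nonneg μ, sq_nonneg ‖B‖]
    · have : 0 < ‖B‖ := norm_pos_iff.mpr h
      nlinarith [sq_nonneg μ, sq_nonneg ‖A‖]
end

section
/- Let p ≥ 1, Q ⊂ ℝ^(n+1) a measurable set with 0 < |Q| < ∞, and f ∈ L^p(Q, ℝ^k). Denote by (f)_Q the mean of f over Q and define V_λ(B) = (λ² + |B|²)^((p-2)/4) B. Then for every A ∈ ℝ^k there holds (1/|Q|) ∫_Q |V_{|(f)_Q|}(f - (f)_Q)|² dz ≤ C(p) (1/|Q|) ∫_Q |V_{|A|}(f - A)|² dz. Moreover, in the case p ≥ 2 the inequality holds with the explicit constant C(p) = 2^(2p). -/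
set_option maxHeartbeats 1000000

open MeasureTheory

namespace MeanQM

noncomputable def phi (p lam t : ℝ) : ℝ := (lam ^ 2 + t ^ 2) ^ ((p - 2) / 2) * t ^ 2

lemma phi_nonneg (p lam t : ℝ) : 0 ≤ phi p lam t :=
  mul_nonneg (Real.rpow_nonneg (by positivity) _) (sq_nonneg t)

lemma phi_zero (p lam : ℝ) : phi p lam 0 = 0 := by simp [phi]

lemma norm_Vfun_sq (p lam : ℝ) {k : ℕ} (B : EuclideanSpace ℝ (Fin k)) :
    ‖Vfun p lam B‖ ^ 2 = phi p lam ‖B‖ := by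
  have h0 : (0:ℝ) ≤ lam ^ 2 + ‖B‖ ^ 2 := by positivity
  rw [Vfun, norm_smul, Real.norm_eq_abs, abs_of_nonneg (Real.rpow_nonneg h0 _), mul_pow, phi]
  congr 1
  rw [← Real.rpow_natCast ((lam ^ 2 + ‖B‖ ^ 2) ^ ((p - 2) / 4)) 2, ← Real.rpow_mul h0]
  congr 1
  push_cast; ring

/-- `(t²)^((p-2)/2) * t² = t^p` for `t ≥ 0`, `p > 0`. -/
lemma sq_rpow {p : ℝ} (hp : 0 < p) {t : ℝ} (ht : 0 ≤ t) :
    (t ^ 2) ^ ((p - 2) / 2) * t ^ 2 = t ^ p := by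
  rcases eq_or_lt_of_le ht with h | h
  · rw [← h]; simp [Real.zero_rpow hp.ne']
  · rw [← Real.rpow_natCast t 2, ← Real.rpow_mul h.le, ← Real.rpow_add h]
    congr 1
    push_cast; ring

/-- `(lam²)^((p-2)/2) = lam^(p-2)` for `lam ≥ 0` when `p ≥ 2`. -/
lemma sq_rpow' {p : ℝ} (hp : 2 ≤ p) {lam : ℝ} (hlam : 0 ≤ lam) :
    (lam ^ 2) ^ ((p - 2) / 2) = lam ^ (p - 2) := by
  rw [← Real.rpow_natCast lam 2, ← Real.rpow_mul hlam]
  congr 1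
  push_cast; ring

lemma ratio_le {s t X Y b : ℝ} (hs : 0 < s) (hst : s ≤ t) (hX : 0 < X) (hXY : X ≤ Y)
    (hkey : Y * s ^ 2 ≤ X * t ^ 2) (hb : 0 ≤ b) (hb2 : b ≤ 1/2) : (Y/X) ^ b * s ≤ t := by
  have ht : 0 < t := lt_of_lt_of_le hs hst
  have hr1 : 1 ≤ Y / X := (one_le_div hX).2 hXY
  have h2 : Y / X ≤ (t / s) ^ 2 := by
    rw [div_pow, div_le_div_iff₀ hX (by positivity)]
    nlinarith
  have h3 : (Y/X) ^ b ≤ (Y/X) ^ (1/2 : ℝ) := Real.rpow_le_rpow_of_exponent_le hr1 hb2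
  have h4 : (Y/X) ^ (1/2:ℝ) ≤ ((t/s) ^ 2) ^ (1/2:ℝ) :=
    Real.rpow_le_rpow (by positivity) h2 (by norm_num)
  have h5 : ((t/s) ^ 2) ^ (1/2:ℝ) = t / s := by
    rw [← Real.rpow_natCast (t/s) 2, ← Real.rpow_mul (by positivity)]
    norm_num
  have h6 : (Y/X) ^ b ≤ t / s := le_trans h3 (h5 ▸ h4)
  calc (Y/X) ^ b * s ≤ (t/s) * s := by
        exact mul_le_mul_of_nonneg_right h6 hs.le
    _ = t := div_mul_cancel₀ t hs.ne'

lemma phi_mono {p : ℝ} (hp : 1 ≤ p) {lam s t : ℝ} (hs : 0 ≤ s) (hst : s ≤ t) :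
    phi p lam s ≤ phi p lam t := by
  have ht : 0 ≤ t := le_trans hs hst
  rcases le_or_gt 2 p with h2 | h2
  · unfold phi
    apply mul_le_mul (Real.rpow_le_rpow (by positivity) (by nlinarith) (by linarith))
      (by nlinarith) (by positivity) (Real.rpow_nonneg (by positivity) _)
  · rcases eq_or_lt_of_le hs with h | h
    · rw [← h, phi_zero]; exact phi_nonneg _ _ _
    · have ht' : 0 < t := lt_of_lt_of_le h hst
      set X := lam ^ 2 + s ^ 2 with hXdef
      set Y := lam ^ 2 + t ^ 2 with hYdef
      have hX : 0 < X := by positivity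
      have hY : 0 < Y := by positivity
      have hXY : X ≤ Y := by nlinarith
      set b := (2 - p) / 2 with hbdef
      have hq : (p - 2) / 2 = -b := by rw [hbdef]; ring
      have h1 : (Y/X) ^ b * s ≤ t := ratio_le h hst hX hXY (by nlinarith)
        (by rw [hbdef]; linarith) (by rw [hbdef]; linarith)
      have hYb : Y ^ b = (Y/X) ^ b * X ^ b := by
        rw [← Real.mul_rpow (by positivity) hX.le, div_mul_cancel₀ _ hX.ne']
      unfold phi
      rw [← hXdef, ← hYdef, hq, Real.rpow_neg hX.le, Real.rpow_neg hY.le,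
        inv_mul_eq_div, inv_mul_eq_div, div_le_div_iff₀ (Real.rpow_pos_of_pos hX _)
          (Real.rpow_pos_of_pos hY _)]
      calc s ^ 2 * Y ^ b = ((Y/X) ^ b * s) * (s * X ^ b) := by rw [hYb]; ring
        _ ≤ t * (t * X ^ b) := by
            apply mul_le_mul h1 (mul_le_mul_of_nonneg_right hst
              (Real.rpow_nonneg hX.le _)) (by positivity) ht'.le
        _ = t ^ 2 * X ^ b := by ring

lemma phi_star {p : ℝ} (hp : 1 ≤ p) (hp2 : p ≤ 2) {lam s t : ℝ} (hs : 0 < s) (hst : s ≤ t) :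
    t * phi p lam s ≤ s * phi p lam t := by
  have ht : 0 < t := lt_of_lt_of_le hs hst
  set X := lam ^ 2 + s ^ 2 with hXdef
  set Y := lam ^ 2 + t ^ 2 with hYdef
  have hX : 0 < X := by positivity
  have hY : 0 < Y := by positivity
  have hXY : X ≤ Y := by nlinarith
  set b := (2 - p) / 2 with hbdef
  have hq : (p - 2) / 2 = -b := by rw [hbdef]; ring
  have h1 : (Y/X) ^ b * s ≤ t := ratio_le hs hst hX hXY (by nlinarith)
    (by rw [hbdef]; linarith) (by rw [hbdef]; linarith)
  have hYb : Y ^ b = (Y/X) ^ b * X ^ b := by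
    rw [← Real.mul_rpow (by positivity) hX.le, div_mul_cancel₀ _ hX.ne']
  unfold phi
  rw [← hXdef, ← hYdef, hq, Real.rpow_neg hX.le, Real.rpow_neg hY.le]
  rw [show t * ((X ^ b)⁻¹ * s ^ 2) = (t * s ^ 2) / X ^ b by ring,
    show s * ((Y ^ b)⁻¹ * t ^ 2) = (s * t ^ 2) / Y ^ b by ring,
    div_le_div_iff₀ (Real.rpow_pos_of_pos hX _) (Real.rpow_pos_of_pos hY _)]
  calc t * s ^ 2 * Y ^ b = (t * s) * (((Y/X) ^ b * s) * X ^ b) := by rw [hYb]; ring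
    _ ≤ (t * s) * (t * X ^ b) := by
        apply mul_le_mul_of_nonneg_left (mul_le_mul_of_nonneg_right h1
          (Real.rpow_nonneg hX.le _)) (by positivity)
    _ = s * t ^ 2 * X ^ b := by ring

lemma phi_double {p : ℝ} (hp2 : p ≤ 2) {lam t : ℝ} (ht : 0 ≤ t) :
    phi p lam (2 * t) ≤ 4 * phi p lam t := by
  rcases eq_or_lt_of_le ht with h | h
  · rw [← h]; norm_num [phi_zero]
  · unfold phi
    have h1 : (lam ^ 2 + (2*t) ^ 2) ^ ((p-2)/2) ≤ (lam ^ 2 + t ^ 2) ^ ((p-2)/2) :=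
      Real.rpow_le_rpow_of_nonpos (by positivity) (by nlinarith) (by linarith)
    calc (lam ^ 2 + (2*t) ^ 2) ^ ((p-2)/2) * (2*t) ^ 2
        ≤ (lam ^ 2 + t ^ 2) ^ ((p-2)/2) * (2*t) ^ 2 :=
          mul_le_mul_of_nonneg_right h1 (by positivity)
      _ = 4 * ((lam ^ 2 + t ^ 2) ^ ((p-2)/2) * t ^ 2) := by ring

lemma phi_shift {p : ℝ} (hp : 1 ≤ p) (hp2 : p ≤ 2) {lam t d t' : ℝ} (ht : 0 ≤ t) (hd : 0 ≤ d)
    (ht' : 0 ≤ t') (h1 : t' ≤ t + d) : phi p lam t' ≤ 4 * (phi p lam t + phi p lam d) := by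
  have h2 : phi p lam t' ≤ phi p lam (t + d) := phi_mono hp ht' h1
  rcases le_total d t with h | h
  · have h3 : phi p lam (t + d) ≤ phi p lam (2 * t) := phi_mono hp (by positivity) (by linarith)
    have h4 := phi_double hp2 ht (lam := lam)
    have h5 := phi_nonneg p lam d
    linarith
  · have h3 : phi p lam (t + d) ≤ phi p lam (2 * d) := phi_mono hp (by positivity) (by linarith)
    have h4 := phi_double hp2 hd (lam := lam)
    have h5 := phi_nonneg p lam t
    linarith


lemma rpow_half_le {a c : ℝ} (ha : 1 ≤ a) (hc : 0 ≤ c) (h : a ≤ c ^ 2) {b : ℝ}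
    (hb : 0 ≤ b) (hb2 : b ≤ 1/2) : a ^ b ≤ c := by
  have h1 : a ^ b ≤ a ^ (1/2:ℝ) := Real.rpow_le_rpow_of_exponent_le ha hb2
  have h2 : a ^ (1/2:ℝ) ≤ (c ^ 2) ^ (1/2:ℝ) := Real.rpow_le_rpow (by linarith) h (by norm_num)
  have h3 : (c ^ 2) ^ (1/2:ℝ) = c := by
    rw [← Real.rpow_natCast c 2, ← Real.rpow_mul hc]
    norm_num
  linarith

lemma le_phi_rpow {p : ℝ} (hp2 : 2 ≤ p) {lam t : ℝ} (ht : 0 ≤ t) : t ^ p ≤ phi p lam t := by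
  rcases eq_or_lt_of_le ht with h | h
  · rw [← h, Real.zero_rpow (by positivity : p ≠ 0)]; exact phi_nonneg _ _ _
  · rw [← sq_rpow (by linarith) ht]
    exact mul_le_mul_of_nonneg_right (Real.rpow_le_rpow (by positivity) (by nlinarith)
      (by linarith)) (by positivity)

lemma le_phi_sq {p : ℝ} (hp2 : 2 ≤ p) {lam t : ℝ} (hlam : 0 ≤ lam) :
    lam ^ (p - 2) * t ^ 2 ≤ phi p lam t := by
  rw [← sq_rpow' hp2 hlam]
  exact mul_le_mul_of_nonneg_right (Real.rpow_le_rpow (by positivity) (by nlinarith)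
    (by linarith)) (sq_nonneg t)

lemma phi_le_split {p : ℝ} (hp2 : 2 ≤ p) {lam d : ℝ} (hlam : 0 ≤ lam) (hd : 0 ≤ d) :
    phi p lam d ≤ 2 ^ ((p-2)/2) * (lam ^ (p-2) * d ^ 2 + d ^ p) := by
  have hq : (0:ℝ) ≤ (p-2)/2 := by linarith
  have hlp : (0:ℝ) ≤ lam ^ (p-2) := Real.rpow_nonneg hlam _
  have h2q : (0:ℝ) ≤ 2 ^ ((p-2)/2) := Real.rpow_nonneg (by norm_num) _
  rcases eq_or_lt_of_le hd with h | h
  · rw [← h, phi_zero, Real.zero_rpow (by positivity : p ≠ 0)]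
    positivity
  · rcases le_total lam d with hld | hld
    · have h1 : phi p lam d ≤ (2 * d ^ 2) ^ ((p-2)/2) * d ^ 2 :=
        mul_le_mul_of_nonneg_right (Real.rpow_le_rpow (by positivity) (by nlinarith) hq)
          (sq_nonneg d)
      rw [Real.mul_rpow (by norm_num) (by positivity), mul_assoc, sq_rpow (by linarith) hd] at h1
      have h3 : (0:ℝ) ≤ 2 ^ ((p-2)/2) * (lam ^ (p-2) * d ^ 2) := by positivity
      nlinarith
    · have h1 : phi p lam d ≤ (2 * lam ^ 2) ^ ((p-2)/2) * d ^ 2 :=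
        mul_le_mul_of_nonneg_right (Real.rpow_le_rpow (by positivity) (by nlinarith) hq)
          (sq_nonneg d)
      rw [Real.mul_rpow (by norm_num) (by positivity), sq_rpow' hp2 hlam] at h1
      have h3 : (0:ℝ) ≤ 2 ^ ((p-2)/2) * d ^ p := by
        have := Real.rpow_nonneg h.le p; positivity
      nlinarith

lemma one_le_two_rpow {x : ℝ} (hx : 0 ≤ x) : (1:ℝ) ≤ 2 ^ x := by
  have := Real.rpow_le_rpow_of_exponent_le (by norm_num : (1:ℝ) ≤ 2) hx
  rwa [Real.rpow_zero] at this

lemma phi_le_dom {p : ℝ} (hp : 1 ≤ p) {lam t : ℝ} (hlam : 0 ≤ lam) (ht : 0 ≤ t) :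
    phi p lam t ≤ 2 ^ p * lam ^ p + 2 ^ p * t ^ p := by
  have hp0 : (0:ℝ) < p := by linarith
  have h2p : (1:ℝ) ≤ 2 ^ p := one_le_two_rpow hp0.le
  have hlp : (0:ℝ) ≤ lam ^ p := Real.rpow_nonneg hlam _
  have htp : (0:ℝ) ≤ t ^ p := Real.rpow_nonneg ht _
  rcases eq_or_lt_of_le ht with h | h
  · rw [← h, phi_zero]; positivity
  · rcases le_or_gt 2 p with h2 | h2
    · have hq : (0:ℝ) ≤ (p-2)/2 := by linarith
      have step1 : phi p lam t ≤ (lam ^ 2 + t ^ 2) ^ (p/2) := by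
        unfold phi
        rw [show p/2 = (p-2)/2 + 1 by ring, Real.rpow_add (by positivity), Real.rpow_one]
        exact mul_le_mul_of_nonneg_left (by nlinarith) (Real.rpow_nonneg (by positivity) _)
      rcases le_total lam t with hld | hld
      · have step2 : (lam ^ 2 + t ^ 2) ^ (p/2) ≤ (2 * t ^ 2) ^ (p/2) :=
          Real.rpow_le_rpow (by positivity) (by nlinarith) (by positivity)
        have step3 : (2 * t ^ 2) ^ (p/2) = 2 ^ (p/2) * t ^ p := by
          rw [Real.mul_rpow (by norm_num) (by positivity), ← Real.rpow_natCast t 2,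
            ← Real.rpow_mul ht, show ((2:ℕ):ℝ) * (p/2) = p by push_cast; ring]
        have step4 : (2:ℝ) ^ (p/2) ≤ 2 ^ p :=
          Real.rpow_le_rpow_of_exponent_le (by norm_num) (by linarith)
        nlinarith
      · have step2 : (lam ^ 2 + t ^ 2) ^ (p/2) ≤ (2 * lam ^ 2) ^ (p/2) :=
          Real.rpow_le_rpow (by positivity) (by nlinarith) (by positivity)
        have step3 : (2 * lam ^ 2) ^ (p/2) = 2 ^ (p/2) * lam ^ p := by
          rw [Real.mul_rpow (by norm_num) (by positivity), ← Real.rpow_natCast lam 2,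
            ← Real.rpow_mul hlam, show ((2:ℕ):ℝ) * (p/2) = p by push_cast; ring]
        have step4 : (2:ℝ) ^ (p/2) ≤ 2 ^ p :=
          Real.rpow_le_rpow_of_exponent_le (by norm_num) (by linarith)
        nlinarith
    · have step1 : phi p lam t ≤ t ^ p := by
        rw [← sq_rpow hp0 ht]
        exact mul_le_mul_of_nonneg_right (Real.rpow_le_rpow_of_nonpos (by positivity)
          (by nlinarith) (by linarith)) (sq_nonneg t)
      nlinarith

lemma phi_core_ge2 {p : ℝ} (hp2 : 2 ≤ p) {lam lam' t t' d : ℝ}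
    (hlam : 0 ≤ lam) (hlam' : 0 ≤ lam') (ht : 0 ≤ t) (ht' : 0 ≤ t') (hd : 0 ≤ d)
    (h1 : t' ≤ t + d) (h2 : lam' ≤ lam + d) :
    phi p lam' t' ≤ 2 ^ ((3*p-2)/2) * (phi p lam t + phi p lam d) := by
  have hq : (0:ℝ) ≤ (p-2)/2 := by linarith
  have hconst : (2:ℝ) ^ ((3*p-2)/2) = 4 * 8 ^ ((p-2)/2) := by
    rw [show (8:ℝ) = 2 ^ (3:ℝ) by norm_num [Real.rpow_natCast], ← Real.rpow_mul (by norm_num),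
      show (4:ℝ) = 2 ^ (2:ℝ) by norm_num [Real.rpow_natCast], ← Real.rpow_add (by norm_num)]
    congr 1; ring
  have hl2 : lam' ^ 2 ≤ 2*lam^2 + 2*d^2 := by nlinarith [sq_nonneg (lam - d), sq_nonneg (lam + d)]
  have ht2 : t' ^ 2 ≤ 2*t^2 + 2*d^2 := by nlinarith [sq_nonneg (t - d), sq_nonneg (t + d)]
  rcases le_total d t with hdt | hdt
  · have key : phi p lam' t' ≤ (8 * (lam ^ 2 + t ^ 2)) ^ ((p-2)/2) * (4 * t ^ 2) := by
      unfold phi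
      apply mul_le_mul (Real.rpow_le_rpow (by positivity) (by nlinarith [sq_nonneg (t-d)]) hq)
        (by nlinarith [sq_nonneg (t-d)]) (sq_nonneg t') (Real.rpow_nonneg (by positivity) _)
    rw [Real.mul_rpow (by norm_num) (by positivity)] at key
    have hphid := phi_nonneg p lam d
    have h8 : (0:ℝ) ≤ 8 ^ ((p-2)/2) := Real.rpow_nonneg (by norm_num) _
    calc phi p lam' t' ≤ 8 ^ ((p-2)/2) * (lam ^ 2 + t ^ 2) ^ ((p-2)/2) * (4 * t ^ 2) := key
      _ = 4 * 8 ^ ((p-2)/2) * phi p lam t := by unfold phi; ring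
      _ ≤ 4 * 8 ^ ((p-2)/2) * (phi p lam t + phi p lam d) := by nlinarith [phi_nonneg p lam t]
      _ = 2 ^ ((3*p-2)/2) * (phi p lam t + phi p lam d) := by rw [hconst]
  · have key : phi p lam' t' ≤ (8 * (lam ^ 2 + d ^ 2)) ^ ((p-2)/2) * (4 * d ^ 2) := by
      unfold phi
      apply mul_le_mul (Real.rpow_le_rpow (by positivity) (by nlinarith [sq_nonneg (d-t)]) hq)
        (by nlinarith [sq_nonneg (d-t)]) (sq_nonneg t') (Real.rpow_nonneg (by positivity) _)
    rw [Real.mul_rpow (by norm_num) (by positivity)] at key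
    have hphit := phi_nonneg p lam t
    have h8 : (0:ℝ) ≤ 8 ^ ((p-2)/2) := Real.rpow_nonneg (by norm_num) _
    calc phi p lam' t' ≤ 8 ^ ((p-2)/2) * (lam ^ 2 + d ^ 2) ^ ((p-2)/2) * (4 * d ^ 2) := key
      _ = 4 * 8 ^ ((p-2)/2) * phi p lam d := by unfold phi; ring
      _ ≤ 4 * 8 ^ ((p-2)/2) * (phi p lam t + phi p lam d) := by nlinarith [phi_nonneg p lam d]
      _ = 2 ^ ((3*p-2)/2) * (phi p lam t + phi p lam d) := by rw [hconst]

lemma phi_core_lt2 {p : ℝ} (hp : 1 ≤ p) (hp2 : p ≤ 2) {lam lam' t t' d : ℝ}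
    (hlam : 0 ≤ lam) (hlam' : 0 ≤ lam') (ht : 0 ≤ t) (ht' : 0 ≤ t') (hd : 0 ≤ d)
    (h1 : t' ≤ t + d) (h2 : lam ≤ lam' + d) :
    phi p lam' t' ≤ 16 * (phi p lam t + phi p lam d) := by
  have hphit := phi_nonneg p lam t
  have hphid := phi_nonneg p lam d
  have hb : (0:ℝ) ≤ (2-p)/2 := by linarith
  have hb2 : (2-p)/2 ≤ 1/2 := by linarith
  have hshift : phi p lam t' ≤ 4 * (phi p lam t + phi p lam d) := phi_shift hp hp2 ht hd ht' h1
  rcases eq_or_lt_of_le ht' with h0 | h0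
  · rw [← h0, phi_zero]; linarith
  rcases le_or_gt (lam/2) lam' with hA | hA
  · -- lam' ≥ lam/2 : phi p lam' t' ≤ 2 * phi p lam t'
    have hbase : (lam ^ 2 + t' ^ 2)/4 ≤ lam' ^ 2 + t' ^ 2 := by nlinarith
    have hr : (lam' ^ 2 + t' ^ 2) ^ ((p-2)/2) ≤ ((lam ^ 2 + t' ^ 2)/4) ^ ((p-2)/2) :=
      Real.rpow_le_rpow_of_nonpos (by positivity) hbase (by linarith)
    have hdiv : ((lam ^ 2 + t' ^ 2)/4) ^ ((p-2)/2)
        = (lam ^ 2 + t' ^ 2) ^ ((p-2)/2) * ((4:ℝ) ^ ((2-p)/2)) := by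
      rw [Real.div_rpow (by positivity) (by norm_num), div_eq_mul_inv, ← Real.rpow_neg (by norm_num)]
      congr 1; ring
    have h4b : (4:ℝ) ^ ((2-p)/2) ≤ 2 := by
      have := rpow_half_le (by norm_num : (1:ℝ) ≤ 4) (by norm_num : (0:ℝ) ≤ 2)
        (by norm_num) hb hb2
      linarith
    have key : phi p lam' t' ≤ 2 * phi p lam t' := by
      unfold phi
      calc (lam' ^ 2 + t' ^ 2) ^ ((p-2)/2) * t' ^ 2
          ≤ ((lam ^ 2 + t' ^ 2) ^ ((p-2)/2) * ((4:ℝ) ^ ((2-p)/2))) * t' ^ 2 := by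
            rw [← hdiv]; exact mul_le_mul_of_nonneg_right hr (sq_nonneg t')
        _ ≤ ((lam ^ 2 + t' ^ 2) ^ ((p-2)/2) * 2) * t' ^ 2 := by
            apply mul_le_mul_of_nonneg_right (mul_le_mul_of_nonneg_left h4b
              (Real.rpow_nonneg (by positivity) _)) (sq_nonneg t')
        _ = 2 * ((lam ^ 2 + t' ^ 2) ^ ((p-2)/2) * t' ^ 2) := by ring
    linarith
  · -- lam' < lam/2, so lam < 2*d
    have hlam2d : lam < 2*d := by linarith
    have hup : phi p lam' t' ≤ t' ^ p := by
      rw [← sq_rpow (by linarith : (0:ℝ) < p) ht']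
      exact mul_le_mul_of_nonneg_right (Real.rpow_le_rpow_of_nonpos (by positivity)
        (by nlinarith) (by linarith)) (sq_nonneg t')
    have h5b : (5:ℝ) ^ ((2-p)/2) ≤ 3 :=
      rpow_half_le (by norm_num) (by norm_num) (by norm_num) hb hb2
    rcases le_or_gt t' d with hB | hB
    · -- t' ≤ d : t'^p ≤ d^p ≤ 3 * phi p lam d
      have hd0 : 0 < d := lt_of_lt_of_le h0 hB
      have h1' : t' ^ p ≤ d ^ p := Real.rpow_le_rpow ht' hB (by linarith)
      have hlow : (5 * d ^ 2) ^ ((p-2)/2) ≤ (lam ^ 2 + d ^ 2) ^ ((p-2)/2) :=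
        Real.rpow_le_rpow_of_nonpos (by positivity) (by nlinarith) (by linarith)
      have hlow2 : 5 ^ ((p-2)/2) * d ^ p ≤ phi p lam d := by
        unfold phi
        rw [← sq_rpow (by linarith : (0:ℝ) < p) hd0.le, ← mul_assoc,
          ← Real.mul_rpow (by norm_num) (by positivity)]
        exact mul_le_mul_of_nonneg_right hlow (sq_nonneg d)
      have hfive : (5:ℝ) ^ ((2-p)/2) * 5 ^ ((p-2)/2) = 1 := by
        rw [← Real.rpow_add (by norm_num), show (2-p)/2 + (p-2)/2 = 0 by ring, Real.rpow_zero]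
      have h5pos : (0:ℝ) < 5 ^ ((2-p)/2) := Real.rpow_pos_of_pos (by norm_num) _
      have hdp : d ^ p ≤ 3 * phi p lam d := by
        calc d ^ p = (5 ^ ((2-p)/2) * 5 ^ ((p-2)/2)) * d ^ p := by rw [hfive]; ring
          _ = 5 ^ ((2-p)/2) * (5 ^ ((p-2)/2) * d ^ p) := by ring
          _ ≤ 5 ^ ((2-p)/2) * phi p lam d := mul_le_mul_of_nonneg_left hlow2 h5pos.le
          _ ≤ 3 * phi p lam d := mul_le_mul_of_nonneg_right h5b hphid
      linarith
    · -- d < t' : lam < 2 t', t'^p ≤ 3 * phi p lam t' ≤ 12 (...)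
      have hlow : (5 * t' ^ 2) ^ ((p-2)/2) ≤ (lam ^ 2 + t' ^ 2) ^ ((p-2)/2) :=
        Real.rpow_le_rpow_of_nonpos (by positivity) (by nlinarith) (by linarith)
      have hlow2 : 5 ^ ((p-2)/2) * t' ^ p ≤ phi p lam t' := by
        unfold phi
        rw [← sq_rpow (by linarith : (0:ℝ) < p) h0.le, ← mul_assoc,
          ← Real.mul_rpow (by norm_num) (by positivity)]
        exact mul_le_mul_of_nonneg_right hlow (sq_nonneg t')
      have hfive : (5:ℝ) ^ ((2-p)/2) * 5 ^ ((p-2)/2) = 1 := by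
        rw [← Real.rpow_add (by norm_num), show (2-p)/2 + (p-2)/2 = 0 by ring, Real.rpow_zero]
      have h5pos : (0:ℝ) < 5 ^ ((2-p)/2) := Real.rpow_pos_of_pos (by norm_num) _
      have htp : t' ^ p ≤ 3 * phi p lam t' := by
        calc t' ^ p = (5 ^ ((2-p)/2) * 5 ^ ((p-2)/2)) * t' ^ p := by rw [hfive]; ring
          _ = 5 ^ ((2-p)/2) * (5 ^ ((p-2)/2) * t' ^ p) := by ring
          _ ≤ 5 ^ ((2-p)/2) * phi p lam t' := mul_le_mul_of_nonneg_left hlow2 h5pos.le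
          _ ≤ 3 * phi p lam t' := mul_le_mul_of_nonneg_right h5b (phi_nonneg _ _ _)
      linarith

lemma phi_linear_lb {p : ℝ} (hp : 1 ≤ p) (hp2 : p ≤ 2) {lam T : ℝ} (hT : 0 < T)
    {t : ℝ} (ht : 0 ≤ t) :
    2 * phi p lam (T/2) / T * t - phi p lam (T/2) ≤ phi p lam t := by
  set c := phi p lam (T/2) with hc
  have hc0 : 0 ≤ c := phi_nonneg _ _ _
  rcases le_or_gt (T/2) t with h | h
  · have hstar := phi_star hp hp2 (by positivity : (0:ℝ) < T/2) h (lam := lam)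
    -- t * c ≤ T/2 * phi p lam t
    have h2 : 2 * c / T * t ≤ phi p lam t := by
      rw [div_mul_eq_mul_div, div_le_iff₀ hT]
      nlinarith
    have h3 := phi_nonneg p lam t
    linarith
  · have h2 : 2 * c / T * t ≤ c := by
      have hb : 2 * c / T * t ≤ 2 * c / T * (T/2) := by
        apply mul_le_mul_of_nonneg_left h.le (by positivity)
      have : 2 * c / T * (T/2) = c := by field_simp
      linarith
    have h3 := phi_nonneg p lam t
    linarith


theorem main_est (p : ℝ) (hp : 1 ≤ p) (n k : ℕ)
    (Q : Set (EuclideanSpace ℝ (Fin (n + 1))))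
    (f : EuclideanSpace ℝ (Fin (n + 1)) → EuclideanSpace ℝ (Fin k))
    (hQ : MeasurableSet Q) (h0 : 0 < volume Q) (hfin : volume Q < ⊤)
    (hf : MemLp f (ENNReal.ofReal p) (volume.restrict Q))
    (A : EuclideanSpace ℝ (Fin k)) :
    0 ≤ (⨍ z in Q, ‖Vfun p ‖A‖ (f z - A)‖ ^ 2) ∧
    (⨍ z in Q, ‖Vfun p ‖⨍ w in Q, f w‖ (f z - ⨍ w in Q, f w)‖ ^ 2) ≤
      (if 2 ≤ p then (2:ℝ) ^ (2*p) else 80) * ⨍ z in Q, ‖Vfun p ‖A‖ (f z - A)‖ ^ 2 := by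
  have hp0 : (0:ℝ) < p := by linarith
  set μ0 := volume.restrict Q with hμ0
  haveI : IsFiniteMeasure μ0 := ⟨by rwa [hμ0, Measure.restrict_apply_univ]⟩
  haveI : NeZero μ0 := ⟨by
    apply Measure.measure_univ_ne_zero.mp
    rw [hμ0, Measure.restrict_apply_univ]
    exact h0.ne'⟩
  set ν := (μ0 Set.univ)⁻¹ • μ0 with hν
  haveI hprob : IsProbabilityMeasure ν := by rw [hν]; infer_instance
  set m := ⨍ w in Q, f w with hm
  -- pass to the probability measure ν
  have hsm : (μ0 Set.univ)⁻¹ ≠ (⊤ : ENNReal) := by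
    rw [hμ0, Measure.restrict_apply_univ]
    exact ENNReal.inv_ne_top.mpr h0.ne'
  have hfν : MemLp f (ENNReal.ofReal p) ν := hf.smul_measure hsm
  have hpE1 : (1:ENNReal) ≤ ENNReal.ofReal p := by
    rw [show (1:ENNReal) = ENNReal.ofReal 1 by simp]
    exact ENNReal.ofReal_le_ofReal hp
  have hfA : MemLp (fun z => f z - A) (ENNReal.ofReal p) ν := by
    have := hfν.sub (memLp_const (μ := ν) A)
    exact this
  have hfA_i : Integrable (fun z => f z - A) ν := hfA.integrable hpE1
  have ht_i : Integrable (fun z => ‖f z - A‖) ν := hfA_i.norm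
  have htp_i : Integrable (fun z => ‖f z - A‖ ^ p) ν := by
    have := hfA.integrable_norm_rpow (ENNReal.ofReal_pos.mpr hp0).ne'
      ENNReal.ofReal_ne_top
    simpa [ENNReal.toReal_ofReal hp0.le] using this
  have hta : AEMeasurable (fun z => ‖f z - A‖) ν := ht_i.aestronglyMeasurable.aemeasurable
  have hφ_meas : AEStronglyMeasurable (fun z => phi p ‖A‖ ‖f z - A‖) ν := by
    unfold phi
    exact (by fun_prop : AEMeasurable
      (fun z => (‖A‖ ^ 2 + ‖f z - A‖ ^ 2) ^ ((p - 2) / 2) * ‖f z - A‖ ^ 2) ν).aestronglyMeasurable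
  have hφ_i : Integrable (fun z => phi p ‖A‖ ‖f z - A‖) ν := by
    apply Integrable.mono' ((integrable_const ((2:ℝ) ^ p * ‖A‖ ^ p)).add
      (htp_i.const_mul ((2:ℝ) ^ p))) hφ_meas
    filter_upwards with z
    rw [Real.norm_eq_abs, abs_of_nonneg (phi_nonneg _ _ _)]
    exact phi_le_dom hp (norm_nonneg A) (norm_nonneg _)
  set R := ∫ z, phi p ‖A‖ ‖f z - A‖ ∂ν with hRdef
  have hR : 0 ≤ R := integral_nonneg fun z => phi_nonneg _ _ _
  -- averages as integrals over ν
  have havg : (⨍ z in Q, ‖Vfun p ‖A‖ (f z - A)‖ ^ 2) = R := by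
    rw [← hμ0, average_eq', ← hν, hRdef]
    congr 1
    funext z
    rw [norm_Vfun_sq]
  have hmean : m = ∫ z, f z ∂ν := by rw [hm, ← hμ0, average_eq', ← hν]
  have hmA : m - A = ∫ z, (f z - A) ∂ν := by
    rw [integral_sub (hfν.integrable hpE1) (integrable_const A), integral_const, probReal_univ,
      one_smul, hmean]
  set T := ∫ z, ‖f z - A‖ ∂ν with hTdef
  set d := ‖m - A‖ with hd
  have hd0' : (0:ℝ) ≤ d := by rw [hd]; exact norm_nonneg _
  have hdT : d ≤ T := by rw [hd, hmA]; exact norm_integral_le_integral_norm _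
  have hT0 : 0 ≤ T := integral_nonneg fun z => norm_nonneg _
  have hφd : 0 ≤ phi p ‖A‖ d := phi_nonneg _ _ _
  -- triangle inequalities
  have hlamm : ‖m‖ ≤ ‖A‖ + d := by
    have h := norm_add_le (m - A) A
    rw [sub_add_cancel] at h
    rw [hd]; linarith
  have hlamA : ‖A‖ ≤ ‖m‖ + d := by
    have h := norm_add_le (A - m) m
    rw [sub_add_cancel] at h
    rw [hd, norm_sub_rev m A]; linarith
  have htz : ∀ z, ‖f z - m‖ ≤ ‖f z - A‖ + d := by
    intro z
    have h := norm_add_le (f z - A) (A - m)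
    rw [sub_add_sub_cancel] at h
    rw [hd, norm_sub_rev m A]; linarith
  -- step A
  set K := if 2 ≤ p then (2:ℝ) ^ ((3*p-2)/2) else 16 with hK
  have hK0 : 0 ≤ K := by
    rw [hK]; split_ifs
    · exact Real.rpow_nonneg (by norm_num) _
    · norm_num
  have hstepA : (∫ z, phi p ‖m‖ ‖f z - m‖ ∂ν) ≤ K * (R + phi p ‖A‖ d) := by
    have hmono : (∫ z, phi p ‖m‖ ‖f z - m‖ ∂ν)
        ≤ ∫ z, K * (phi p ‖A‖ ‖f z - A‖ + phi p ‖A‖ d) ∂ν := by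
      apply integral_mono_of_nonneg
      · filter_upwards with z using phi_nonneg _ _ _
      · exact (hφ_i.add (integrable_const _)).const_mul K
      · filter_upwards with z
        rw [hK]; split_ifs with h2
        · exact phi_core_ge2 h2 (norm_nonneg A) (norm_nonneg m) (norm_nonneg _)
            (norm_nonneg _) (norm_nonneg _) (htz z) hlamm
        · exact phi_core_lt2 hp (le_of_not_ge h2) (norm_nonneg A) (norm_nonneg m)
            (norm_nonneg _) (norm_nonneg _) (norm_nonneg _) (htz z) hlamA
    calc (∫ z, phi p ‖m‖ ‖f z - m‖ ∂ν) ≤ ∫ z, K * (phi p ‖A‖ ‖f z - A‖ + phi p ‖A‖ d) ∂ν := hmono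
      _ = K * (R + phi p ‖A‖ d) := by
          rw [integral_const_mul, integral_add hφ_i (integrable_const _), integral_const,
            probReal_univ, one_smul]
  -- step B
  set J := if 2 ≤ p then (2:ℝ) ^ (p/2) else 4 with hJ
  have hstepB : phi p ‖A‖ d ≤ J * R := by
    rw [hJ]; split_ifs with h2
    · -- p ≥ 2
      have ht2mem : MemLp (fun z => ‖f z - A‖) 2 ν := by
        have := (hfA.norm).mono_exponent (q := ENNReal.ofReal p)
          (p := (2:ENNReal)) (by
            rw [show (2:ENNReal) = ENNReal.ofReal 2 by simp]
            exact ENNReal.ofReal_le_ofReal h2)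
        exact this
      have ht2_i : Integrable (fun z => ‖f z - A‖ ^ 2) ν := ht2mem.integrable_sq
      have hvar : T ^ 2 ≤ ∫ z, ‖f z - A‖ ^ 2 ∂ν := by
        have hcal := ConvexOn.map_average_le (μ := ν) (f := fun z => ‖f z - A‖)
          (Even.convexOn_pow (even_two)) ((continuous_pow 2).continuousOn) isClosed_univ
          (by filter_upwards with z using Set.mem_univ _) ht_i (by exact ht2_i)
        simp only [average_eq_integral] at hcal
        rw [← hTdef] at hcal
        exact hcal
      have hd2 : d ^ 2 ≤ ∫ z, ‖f z - A‖ ^ 2 ∂ν := by nlinarith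
      have hjen : T ^ p ≤ ∫ z, ‖f z - A‖ ^ p ∂ν := by
        have hcal := ConvexOn.map_average_le (μ := ν) (f := fun z => ‖f z - A‖)
          (convexOn_rpow hp) ((Real.continuous_rpow_const hp0.le).continuousOn)
          isClosed_Ici (by filter_upwards with z using Set.mem_Ici.mpr (norm_nonneg _))
          ht_i (by exact htp_i)
        simp only [average_eq_integral] at hcal
        rw [← hTdef] at hcal
        exact hcal
      have hdp : d ^ p ≤ ∫ z, ‖f z - A‖ ^ p ∂ν :=
        le_trans (Real.rpow_le_rpow (norm_nonneg _) hdT hp0.le) hjen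
      have hi1 : ‖A‖ ^ (p-2) * (∫ z, ‖f z - A‖ ^ 2 ∂ν) ≤ R := by
        rw [← integral_const_mul]
        exact integral_mono (ht2_i.const_mul _) hφ_i fun z => le_phi_sq h2 (norm_nonneg A)
      have hi2 : (∫ z, ‖f z - A‖ ^ p ∂ν) ≤ R :=
        integral_mono htp_i hφ_i fun z => le_phi_rpow h2 (norm_nonneg _)
      have hsplit := phi_le_split h2 (norm_nonneg A) hd0' (d := d)
      have hA2 : (0:ℝ) ≤ ‖A‖ ^ (p-2) := Real.rpow_nonneg (norm_nonneg A) _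
      have h2q : (0:ℝ) ≤ (2:ℝ) ^ ((p-2)/2) := Real.rpow_nonneg (by norm_num) _
      have hcomb : ‖A‖ ^ (p-2) * d ^ 2 + d ^ p ≤ 2 * R := by
        have hstep : ‖A‖ ^ (p-2) * d ^ 2 ≤ ‖A‖ ^ (p-2) * (∫ z, ‖f z - A‖ ^ 2 ∂ν) :=
          mul_le_mul_of_nonneg_left hd2 hA2
        linarith
      have hfin2 : (2:ℝ) ^ ((p-2)/2) * 2 = 2 ^ (p/2) := by
        rw [show p/2 = (p-2)/2 + 1 by ring, Real.rpow_add (by norm_num), Real.rpow_one]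
      calc phi p ‖A‖ d ≤ 2 ^ ((p-2)/2) * (‖A‖ ^ (p-2) * d ^ 2 + d ^ p) := hsplit
        _ ≤ 2 ^ ((p-2)/2) * (2 * R) := mul_le_mul_of_nonneg_left hcomb h2q
        _ = 2 ^ (p/2) * R := by rw [← mul_assoc, hfin2]
    · -- p < 2
      have hlt : p ≤ 2 := (le_of_not_ge h2)
      rcases eq_or_lt_of_le hT0 with hT | hT
      · have hd0 : d = 0 := le_antisymm (hT ▸ hdT) (norm_nonneg _)
        rw [hd0, phi_zero]
        linarith
      · have hstar : phi p ‖A‖ (T/2) ≤ R := by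
          have hlin : Integrable
              (fun z => 2 * phi p ‖A‖ (T/2) / T * ‖f z - A‖ - phi p ‖A‖ (T/2)) ν :=
            (ht_i.const_mul (2 * phi p ‖A‖ (T/2) / T)).sub (integrable_const (phi p ‖A‖ (T/2)))
          have hin := integral_mono hlin hφ_i
            (fun z => phi_linear_lb hp hlt hT (norm_nonneg (f z - A)))
          rw [integral_sub (ht_i.const_mul _) (integrable_const _), integral_const_mul,
            integral_const, probReal_univ, one_smul, ← hTdef] at hin
          have heq : 2 * phi p ‖A‖ (T/2) / T * T - phi p ‖A‖ (T/2) = phi p ‖A‖ (T/2) := by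
            field_simp
            ring
          linarith
        have h1' : phi p ‖A‖ d ≤ phi p ‖A‖ T := phi_mono hp hd0' hdT
        have h2' : phi p ‖A‖ T ≤ 4 * phi p ‖A‖ (T/2) := by
          have := phi_double hlt (by linarith : (0:ℝ) ≤ T/2) (lam := ‖A‖)
          rw [show 2 * (T/2) = T by ring] at this
          linarith
        linarith
  constructor
  · rw [havg]; exact hR
  · have hJ0 : 0 ≤ J := by
      rw [hJ]; split_ifs
      · exact Real.rpow_nonneg (by norm_num) _
      · norm_num
    have hKJ : K * (1 + J) ≤ (if 2 ≤ p then (2:ℝ) ^ (2*p) else 80) := by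
      rw [hK, hJ]; split_ifs with h2
      · have h1 : 1 + (2:ℝ) ^ (p/2) ≤ 2 ^ (p/2+1) := by
          rw [Real.rpow_add (by norm_num), Real.rpow_one]
          have := one_le_two_rpow (by positivity : (0:ℝ) ≤ p/2)
          linarith
        have h3 : (2:ℝ) ^ ((3*p-2)/2) * 2 ^ (p/2+1) = 2 ^ (2*p) := by
          rw [← Real.rpow_add (by norm_num)]
          congr 1; ring
        calc (2:ℝ) ^ ((3*p-2)/2) * (1 + 2 ^ (p/2)) ≤ 2 ^ ((3*p-2)/2) * 2 ^ (p/2+1) :=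
              mul_le_mul_of_nonneg_left h1 (Real.rpow_nonneg (by norm_num) _)
          _ = 2 ^ (2*p) := h3
      · norm_num
    have hcore : (∫ z, phi p ‖m‖ ‖f z - m‖ ∂ν)
        ≤ (if 2 ≤ p then (2:ℝ) ^ (2*p) else 80) * R := by
      calc (∫ z, phi p ‖m‖ ‖f z - m‖ ∂ν) ≤ K * (R + phi p ‖A‖ d) := hstepA
        _ ≤ K * (R + J * R) := by
            apply mul_le_mul_of_nonneg_left _ hK0
            linarith
        _ = (K * (1 + J)) * R := by ring
        _ ≤ (if 2 ≤ p then (2:ℝ) ^ (2*p) else 80) * R :=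
            mul_le_mul_of_nonneg_right hKJ hR
    rw [havg]
    have hlhs : (⨍ z in Q, ‖Vfun p ‖m‖ (f z - m)‖ ^ 2)
        = ∫ z, phi p ‖m‖ ‖f z - m‖ ∂ν := by
      rw [← hμ0, average_eq', ← hν]
      congr 1
      funext z
      rw [norm_Vfun_sq]
    rw [hlhs]
    exact hcore

end MeanQM

/-- Lemma 2.4: the mean is a quasi-minimizer of the V-functional distance:
`⨍_Q |V_{|(f)_Q|}(f - (f)_Q)|² ≤ C(p) ⨍_Q |V_{|A|}(f - A)|²` for every `A`,
and for `p ≥ 2` the inequality holds with the constant `C(p) = 2^(2p)`. -/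
theorem mean_quasi_minimizer (p : ℝ) (hp : 1 ≤ p) (n k : ℕ) :
    (∃ C : ℝ, 0 < C ∧
      ∀ (Q : Set (EuclideanSpace ℝ (Fin (n + 1))))
        (f : EuclideanSpace ℝ (Fin (n + 1)) → EuclideanSpace ℝ (Fin k)),
        MeasurableSet Q → 0 < volume Q → volume Q < ⊤ →
        MemLp f (ENNReal.ofReal p) (volume.restrict Q) →
        ∀ A : EuclideanSpace ℝ (Fin k),
        (⨍ z in Q, ‖Vfun p ‖⨍ w in Q, f w‖ (f z - ⨍ w in Q, f w)‖ ^ 2) ≤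
          C * ⨍ z in Q, ‖Vfun p ‖A‖ (f z - A)‖ ^ 2) ∧
    (2 ≤ p →
      ∀ (Q : Set (EuclideanSpace ℝ (Fin (n + 1))))
        (f : EuclideanSpace ℝ (Fin (n + 1)) → EuclideanSpace ℝ (Fin k)),
        MeasurableSet Q → 0 < volume Q → volume Q < ⊤ →
        MemLp f (ENNReal.ofReal p) (volume.restrict Q) →
        ∀ A : EuclideanSpace ℝ (Fin k),
        (⨍ z in Q, ‖Vfun p ‖⨍ w in Q, f w‖ (f z - ⨍ w in Q, f w)‖ ^ 2) ≤
          (2 : ℝ) ^ (2 * p) * ⨍ z in Q, ‖Vfun p ‖A‖ (f z - A)‖ ^ 2) := by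
  have hpow : (0:ℝ) < 2 ^ (2*p) := Real.rpow_pos_of_pos (by norm_num) _
  constructor
  · refine ⟨(2:ℝ) ^ (2*p) + 80, by positivity, ?_⟩
    intro Q f hQ h0 hfin hf A
    obtain ⟨hR, hmain⟩ := MeanQM.main_est p hp n k Q f hQ h0 hfin hf A
    by_cases h2 : 2 ≤ p
    · rw [if_pos h2] at hmain
      have h80 : (0:ℝ) ≤ 80 * (⨍ z in Q, ‖Vfun p ‖A‖ (f z - A)‖ ^ 2) := by
        have : (0:ℝ) ≤ 80 := by norm_num
        exact mul_nonneg this hR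
      linarith
    · rw [if_neg h2] at hmain
      have hc : (0:ℝ) ≤ 2 ^ (2*p) * (⨍ z in Q, ‖Vfun p ‖A‖ (f z - A)‖ ^ 2) :=
        mul_nonneg hpow.le hR
      linarith
  · intro hp2 Q f hQ h0 hfin hf A
    obtain ⟨hR, hmain⟩ := MeanQM.main_est p hp n k Q f hQ h0 hfin hf A
    rwa [if_pos hp2] at hmain
end
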